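/- arXiv:2601.16450 — 6 statements merged into one kernel-verified Lean document; each statement's English description precedes it below -/
import Mathlib

section
/- Let d_in, d_out, n ∈ ℕ with n ≥ 2. Then every floating-point transformer f : 𝔽^{d_in×n} → 𝔽^{d_out×n} is π_{(1,2)}^n-equivariant, i.e. f(π_{(1,2)}^n X) = π_{(1,2)}^n f(X) for all X ∈ 𝔽^{d_in×n}, where π_{(1,2)}^n is the transposition of the first two columns. -/
open scoped Classical

namespace FPT

noncomputable section

/-- Minimal exponent `𝔢_min = -2^(q-1) + 2`. -/
def emin (q : ℕ) : ℤ := -(2 ^ (q - 1) : ℤ) + 2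

/-- Maximal exponent `𝔢_max = 2^(q-1) - 1`. -/
def emax (q : ℕ) : ℤ := (2 ^ (q - 1) : ℤ) - 1

/-- The set of finite floating-point numbers with `p` mantissa bits and exponent bits `q`:
normal numbers `±(1.m₁⋯m_p)·2^e = m·2^(e-p)` with `2^p ≤ |m| ≤ 2^(p+1)-1` and
`emin ≤ e ≤ emax`, together with subnormal numbers `±(0.m₁⋯m_p)·2^emin = m·2^(emin-p)`
with `|m| ≤ 2^p - 1`. -/
def Fset (p q : ℕ) : Set ℝ :=
  {x | ∃ m e : ℤ, |m| ≤ 2 ^ (p + 1) - 1 ∧ emin q ≤ e ∧ e ≤ emax q ∧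
      ((2 : ℤ) ^ p ≤ |m| ∨ e = emin q) ∧ x = (m : ℝ) * (2 : ℝ) ^ (e - (p : ℤ))}

/-- The largest positive float `Ω = (2 - 2^(-p))·2^emax`. -/
def Omega (p q : ℕ) : ℝ := (2 - (2 : ℝ) ^ (-(p : ℤ))) * (2 : ℝ) ^ (emax q)

/-- Overflow threshold `Ω + 2^(emax - p - 1)`. -/
def thr (p q : ℕ) : ℝ := Omega p q + (2 : ℝ) ^ (emax q - (p : ℤ) - 1)

/-- `y` is a float whose last mantissa bit `m_p` is zero, i.e. `y = m·2^(e-p)` with `m` even. -/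
def EvenMantissa (p q : ℕ) (y : ℝ) : Prop :=
  ∃ m e : ℤ, |m| ≤ 2 ^ (p + 1) - 1 ∧ emin q ≤ e ∧ e ≤ emax q ∧
    ((2 : ℤ) ^ p ≤ |m| ∨ e = emin q) ∧ y = (m : ℝ) * (2 : ℝ) ^ (e - (p : ℤ)) ∧ 2 ∣ m

/-- `RoundsTo p q x y` : `y` is the rounding of `x` to the nearest float, ties to even. -/
def RoundsTo (p q : ℕ) (x y : ℝ) : Prop :=
  y ∈ Fset p q ∧ (∀ z ∈ Fset p q, |x - y| ≤ |x - z|) ∧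
    ((∀ z ∈ Fset p q, |x - z| = |x - y| → z = y) ∨ EvenMantissa p q y)

/-- Extended floats `𝔽̄ = 𝔽 ∪ {-∞, +∞, NaN}` (the payload of `fin` is meant to lie in `Fset`). -/
inductive EF where
  | fin : ℝ → EF
  | pinf : EF
  | ninf : EF
  | nan : EF

/-- Rounding `⌊·⌉ : ℝ → 𝔽̄`. -/
def rnd (p q : ℕ) (x : ℝ) : EF :=
  if thr p q ≤ x then .pinf
  else if x ≤ -thr p q then .ninf
  else .fin (Classical.epsilon (RoundsTo p q x))

/-- Floating-point addition `⊕`. -/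
def fadd (p q : ℕ) : EF → EF → EF
  | .nan, _ => .nan
  | _, .nan => .nan
  | .fin x, .fin y => rnd p q (x + y)
  | .fin _, .pinf => .pinf
  | .fin _, .ninf => .ninf
  | .pinf, .fin _ => .pinf
  | .ninf, .fin _ => .ninf
  | .pinf, .pinf => .pinf
  | .ninf, .ninf => .ninf
  | .pinf, .ninf => .nan
  | .ninf, .pinf => .nan

/-- Floating-point multiplication `⊗`. -/
def fmul (p q : ℕ) : EF → EF → EF
  | .nan, _ => .nan
  | _, .nan => .nan
  | .fin x, .fin y => rnd p q (x * y)
  | .fin x, .pinf => if 0 < x then .pinf else if x < 0 then .ninf else .nan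
  | .fin x, .ninf => if 0 < x then .ninf else if x < 0 then .pinf else .nan
  | .pinf, .fin y => if 0 < y then .pinf else if y < 0 then .ninf else .nan
  | .ninf, .fin y => if 0 < y then .ninf else if y < 0 then .pinf else .nan
  | .pinf, .pinf => .pinf
  | .ninf, .ninf => .pinf
  | .pinf, .ninf => .ninf
  | .ninf, .pinf => .ninf

/-- Floating-point subtraction `x ⊖ y = x ⊕ ((-1) ⊗ y)`. -/
def fsub (p q : ℕ) (x y : EF) : EF := fadd p q x (fmul p q (.fin (-1)) y)

/-- Floating-point division (defined for `0 ≤ x ≤ y < ∞`, `y > 0`; NaN propagates). -/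
def fdiv (p q : ℕ) : EF → EF → EF
  | _, .nan => .nan
  | .nan, _ => .nan
  | .fin x, .fin y => if 0 < y then rnd p q (x / y) else .nan
  | _, _ => .nan

/-- Correctly rounded exponential `⌊exp⌉`. -/
def fexp (p q : ℕ) : EF → EF
  | .fin x => rnd p q (Real.exp x)
  | .pinf => .pinf
  | .ninf => .fin 0
  | .nan => .nan

/-- Correctly rounded ReLU `ρ = ⌊ReLU⌉`. -/
def frelu (p q : ℕ) : EF → EF
  | .fin x => rnd p q (max x 0)
  | .pinf => .pinf
  | .ninf => .fin 0
  | .nan => .nan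

/-- Left-associative floating-point sum of a list (empty sum is `0`). -/
def fsuml (p q : ℕ) : List EF → EF
  | [] => .fin 0
  | x :: xs => xs.foldl (fadd p q) x

/-- Left-associative floating-point sum `⊕_{i=1}^{n} v i` over `Fin n`. -/
def fsum (p q : ℕ) {n : ℕ} (v : Fin n → EF) : EF := fsuml p q ((List.finRange n).map v)

/-- Matrices of extended floats. -/
abbrev Mat (a b : ℕ) := Fin a → Fin b → EF

/-- Entrywise floating-point matrix addition. -/
def madd (p q : ℕ) {a b : ℕ} (M N : Mat a b) : Mat a b := fun i j => fadd p q (M i j) (N i j)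

/-- Floating-point matrix multiplication with left-associative inner sums. -/
def mmul (p q : ℕ) {a b c : ℕ} (M : Mat a b) (N : Mat b c) : Mat a c :=
  fun i k => fsum p q (fun j => fmul p q (M i j) (N j k))

/-- Maximum of two extended floats (NaN-propagating). -/
def emax2 : EF → EF → EF
  | .nan, _ => .nan
  | _, .nan => .nan
  | .pinf, _ => .pinf
  | _, .pinf => .pinf
  | .fin x, .fin y => .fin (max x y)
  | .fin x, .ninf => .fin x
  | .ninf, y => y

/-- Maximum entry of a vector of extended floats. -/
def vmax {n : ℕ} (v : Fin n → EF) : EF := ((List.finRange n).map v).foldl emax2 .ninf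

/-- Floating-point softmax `σ(x)_i = ⌊exp⌉(x_i ⊖ x_*) ⊘ (⊕_j ⌊exp⌉(x_j ⊖ x_*))`. -/
def fsoftmax (p q : ℕ) {n : ℕ} (v : Fin n → EF) : Fin n → EF := fun i =>
  fdiv p q (fexp p q (fsub p q (v i) (vmax v)))
    (fsum p q (fun j => fexp p q (fsub p q (v j) (vmax v))))

/-- Column-wise application of the floating-point softmax. -/
def colSoftmax (p q : ℕ) {k n : ℕ} (A : Mat k n) : Mat k n :=
  fun i j => fsoftmax p q (fun i' => A i' j) i

/-- The extended float is a finite float in `𝔽`. -/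
def EF.IsF (p q : ℕ) : EF → Prop
  | .fin x => x ∈ Fset p q
  | _ => False

/-- The extended float is a well-formed element of `𝔽̄`. -/
def EF.Valid (p q : ℕ) : EF → Prop
  | .fin x => x ∈ Fset p q
  | _ => True

/-- The extended float is finite (not `±∞` or NaN). -/
def EF.Finite : EF → Prop
  | .fin _ => True
  | _ => False

/-- All entries of a vector are finite floats. -/
def VecFin (p q : ℕ) {a : ℕ} (v : Fin a → EF) : Prop := ∀ i, (v i).IsF p q

/-- All entries of a matrix are finite floats. -/
def MatFin (p q : ℕ) {a b : ℕ} (M : Mat a b) : Prop := ∀ i j, (M i j).IsF p q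

/-- Embed a real matrix as a matrix of extended floats. -/
def toEF {a b : ℕ} (M : Fin a → Fin b → ℝ) : Mat a b := fun i j => .fin (M i j)

/-- Parameters of one transformer block (attention layer followed by feed-forward layer)
with `h` heads, head dimension `m`, feed-forward width `r`, hidden dimension `d`. -/
structure Block (h m r d : ℕ) where
  WK : Fin h → Fin m → Fin d → ℝ
  WQ : Fin h → Fin m → Fin d → ℝ
  WV : Fin h → Fin m → Fin d → ℝ
  WO : Fin h → Fin d → Fin m → ℝ
  W1 : Fin r → Fin d → ℝ
  W2 : Fin d → Fin r → ℝ
  b1 : Fin r → ℝ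
  b2 : Fin d → ℝ

/-- All parameters of the block are floats. -/
def Block.Valid (p q : ℕ) {h m r d : ℕ} (B : Block h m r d) : Prop :=
  (∀ i a b, B.WK i a b ∈ Fset p q) ∧ (∀ i a b, B.WQ i a b ∈ Fset p q) ∧
    (∀ i a b, B.WV i a b ∈ Fset p q) ∧ (∀ i a b, B.WO i a b ∈ Fset p q) ∧
    (∀ a b, B.W1 a b ∈ Fset p q) ∧ (∀ a b, B.W2 a b ∈ Fset p q) ∧
    (∀ a, B.b1 a ∈ Fset p q) ∧ (∀ a, B.b2 a ∈ Fset p q)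

/-- The attention layer
`AT(X) = X ⊕ (⊕_i W_i^O ⊗ ((W_i^V ⊗ X) ⊗ σ((W_i^K ⊗ X)ᵀ ⊗ (W_i^Q ⊗ X))))`. -/
def attnApply (p q : ℕ) {h m r d : ℕ} (B : Block h m r d) {n : ℕ} (X : Mat d n) : Mat d n :=
  madd p q X (fun a b =>
    fsum p q (fun i =>
      (mmul p q (toEF (B.WO i))
        (mmul p q (mmul p q (toEF (B.WV i)) X)
          (colSoftmax p q
            (mmul p q (fun u v => mmul p q (toEF (B.WK i)) X v u)
              (mmul p q (toEF (B.WQ i)) X))))) a b))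

/-- The feed-forward layer `FF(X) = X ⊕ (W₂ ⊗ ρ(W₁ ⊗ X ⊕ b₁1ᵀ) ⊕ b₂1ᵀ)`. -/
def ffApply (p q : ℕ) {h m r d : ℕ} (B : Block h m r d) {n : ℕ} (X : Mat d n) : Mat d n :=
  madd p q X
    (madd p q
      (mmul p q (toEF B.W2)
        (fun i j => frelu p q
          ((madd p q (mmul p q (toEF B.W1) X) (fun a _ => .fin (B.b1 a))) i j)))
      (fun a _ => .fin (B.b2 a)))

/-- One transformer block: `FF ∘ AT`. -/
def Block.apply (p q : ℕ) {h m r d n : ℕ} (B : Block h m r d) (X : Mat d n) : Mat d n :=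
  ffApply p q B (attnApply p q B X)

/-- Composition of a list of transformer blocks (applied from left to right). -/
def blocksApply (p q : ℕ) {h m r d n : ℕ} (L : List (Block h m r d)) (X : Mat d n) : Mat d n :=
  L.foldl (fun Y B => Block.apply p q B Y) X

/-- `f` is a floating-point transformer:
`f(X) = W_out ⊗ g(W_in ⊗ X ⊕ b_in 1ᵀ) ⊕ b_out 1ᵀ` with `g` a nonempty composition of
transformer blocks and all parameters finite floats. -/
def IsTransformer (p q din dout n : ℕ) (f : Mat din n → Mat dout n) : Prop :=
  ∃ (h m r d : ℕ) (L : List (Block h m r d)) (Win : Fin d → Fin din → ℝ) (bin : Fin d → ℝ)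
      (Wout : Fin dout → Fin d → ℝ) (bout : Fin dout → ℝ),
    0 < h ∧ 0 < m ∧ 0 < r ∧ 0 < d ∧ L ≠ [] ∧ (∀ B ∈ L, B.Valid p q) ∧
      (∀ i j, Win i j ∈ Fset p q) ∧ (∀ i, bin i ∈ Fset p q) ∧
      (∀ i j, Wout i j ∈ Fset p q) ∧ (∀ i, bout i ∈ Fset p q) ∧
      ∀ X : Mat din n,
        f X = madd p q
          (mmul p q (toEF Wout)
            (blocksApply p q L
              (madd p q (mmul p q (toEF Win) X) (fun i _ => .fin (bin i)))))
          (fun i _ => .fin (bout i))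

/-- Column permutation: column `j` of `permCols π X` is column `π j` of `X`. -/
def permCols {a n : ℕ} (π : Equiv.Perm (Fin n)) (X : Mat a n) : Mat a n := fun i j => X i (π j)

/-- The transposition `π_{(1,2)}^n` of the first two coordinates. -/
def swap12 (n : ℕ) (hn : 2 ≤ n) : Equiv.Perm (Fin n) :=
  Equiv.swap ⟨0, by omega⟩ ⟨1, by omega⟩

/-- The columns of `X` are pairwise distinct. -/
def DistinctCols {a n : ℕ} (X : Mat a n) : Prop :=
  ∀ j k : Fin n, j ≠ k → ∃ i, X i j ≠ X i k

/-- `(α,β)`-similarity (with 1-based column index `i = j+1`). -/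
def Similar {a n : ℕ} (α β : ℕ) (X Y : Mat a n) : Prop :=
  ∃ z1 z2 : Fin a → EF,
    (∀ j : Fin n, (j : ℕ) + 1 ≤ α → ∀ i, X i j = z1 i) ∧
    (∀ j : Fin n, α < (j : ℕ) + 1 → (j : ℕ) + 1 ≤ β → ∀ i, X i j = z2 i) ∧
    (∀ j : Fin n, (j : ℕ) + 1 < α → ∀ i, Y i j = z1 i) ∧
    (∀ j : Fin n, α ≤ (j : ℕ) + 1 → (j : ℕ) + 1 ≤ β → ∀ i, Y i j = z2 i) ∧
    (∀ j : Fin n, β < (j : ℕ) + 1 → ∀ i, X i j = Y i j)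

/-- The smallest float strictly greater than `x` (junk value if none exists). -/
def succF (p q : ℕ) (x : ℝ) : ℝ := sInf {y | y ∈ Fset p q ∧ x < y}

/-- Successor on extended floats: the smallest element of `𝔽 ∪ {+∞}` strictly above. -/
def succEF (p q : ℕ) : EF → EF
  | .fin r => if ∃ y ∈ Fset p q, r < y then .fin (succF p q r) else .pinf
  | e => e

/-- Floating-point affine transformation `φ(x) = W ⊗ x ⊕ b`. -/
def affApply (p q : ℕ) {a b : ℕ} (W : Fin b → Fin a → ℝ) (c : ℝ) (v : Fin a → EF) :
    Fin b → EF :=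
  fun i => fadd p q (fsum p q (fun j => fmul p q (.fin (W i j)) (v j))) (.fin c)

/-- All intermediate values of `φ(x) = W ⊗ x ⊕ b` on input `v`, including every
left-associative partial sum of the matrix–vector product, are finite. -/
def AffIntermFin (p q : ℕ) {a b : ℕ} (W : Fin b → Fin a → ℝ) (c : ℝ) (v : Fin a → EF) : Prop :=
  ∀ i : Fin b,
    (∀ k : ℕ,
      (fsuml p q (((List.finRange a).take k).map
        (fun j => fmul p q (.fin (W i j)) (v j)))).Finite) ∧
    (affApply p q W c v i).Finite

end
end FPT

namespace FPT

noncomputable section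

lemma fadd_comm (p q : ℕ) (x y : EF) : fadd p q x y = fadd p q y x := by
  cases x <;> cases y <;> simp [fadd, add_comm]

lemma emax2_comm (x y : EF) : emax2 x y = emax2 y x := by
  cases x <;> cases y <;> simp [emax2, max_comm]

lemma emax2_ninf (x : EF) : emax2 .ninf x = x := by cases x <;> rfl

lemma finRange_add_two (m : ℕ) :
    List.finRange (m + 2) = (⟨0, by omega⟩ : Fin (m + 2)) :: ⟨1, by omega⟩ ::
      (List.finRange m).map (fun i => i.succ.succ) := by
  rw [List.finRange_succ, List.finRange_succ, List.map_cons, List.map_map]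
  rfl

lemma swap12_succ_succ (m : ℕ) (hn : 2 ≤ m + 2) (i : Fin m) :
    swap12 (m + 2) hn i.succ.succ = i.succ.succ := by
  apply Equiv.swap_apply_of_ne_of_ne <;>
    · simp [Fin.ext_iff]

lemma map_swap (m : ℕ) (hn : 2 ≤ m + 2) (v : Fin (m + 2) → EF) :
    (List.finRange (m + 2)).map (fun j => v (swap12 (m + 2) hn j)) =
      v ⟨1, by omega⟩ :: v ⟨0, by omega⟩ ::
        (List.finRange m).map (fun i => v i.succ.succ) := by
  rw [finRange_add_two]
  simp only [List.map_cons, List.map_map]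
  refine congrArg₂ _ (congrArg v ?_) (congrArg₂ _ (congrArg v ?_) ?_)
  · exact Equiv.swap_apply_left _ _
  · exact Equiv.swap_apply_right _ _
  · apply congrArg (fun g => List.map g (List.finRange m))
    funext i
    exact congrArg v (swap12_succ_succ m hn i)

lemma fsum_swap (p q n : ℕ) (hn : 2 ≤ n) (v : Fin n → EF) :
    fsum p q (fun j => v (swap12 n hn j)) = fsum p q v := by
  obtain ⟨m, rfl⟩ : ∃ m, n = m + 2 := ⟨n - 2, by omega⟩
  unfold fsum
  rw [map_swap, finRange_add_two, List.map_cons, List.map_cons, List.map_map]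
  show fsuml p q (_ :: _ :: _) = fsuml p q (_ :: _ :: _)
  simp only [fsuml, List.foldl_cons]
  rw [fadd_comm]
  rfl

lemma vmax_swap (n : ℕ) (hn : 2 ≤ n) (v : Fin n → EF) :
    vmax (fun j => v (swap12 n hn j)) = vmax v := by
  obtain ⟨m, rfl⟩ : ∃ m, n = m + 2 := ⟨n - 2, by omega⟩
  unfold vmax
  rw [map_swap, finRange_add_two, List.map_cons, List.map_cons, List.map_map]
  simp only [List.foldl_cons, emax2_ninf]
  rw [emax2_comm]
  rfl

lemma fsoftmax_swap (p q n : ℕ) (hn : 2 ≤ n) (v : Fin n → EF) (i : Fin n) :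
    fsoftmax p q (fun j => v (swap12 n hn j)) i = fsoftmax p q v (swap12 n hn i) := by
  unfold fsoftmax
  rw [vmax_swap]
  exact congrArg _ (fsum_swap p q n hn (fun j => fexp p q (fsub p q (v j) (vmax v))))

lemma colSoftmax_perm2 (p q n : ℕ) (hn : 2 ≤ n) (S : Mat n n) :
    colSoftmax p q (fun u k => S (swap12 n hn u) (swap12 n hn k))
      = fun u k => colSoftmax p q S (swap12 n hn u) (swap12 n hn k) := by
  funext u k
  exact fsoftmax_swap p q n hn (fun i' => S i' (swap12 n hn k)) u

lemma mmul_perm2 (p q a n : ℕ) (hn : 2 ≤ n) (V : Mat a n) (S : Mat n n) :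
    mmul p q (permCols (swap12 n hn) V) (fun u k => S (swap12 n hn u) (swap12 n hn k))
      = permCols (swap12 n hn) (mmul p q V S) := by
  funext i k
  exact fsum_swap p q n hn (fun j => fmul p q (V i j) (S j (swap12 n hn k)))

lemma head_perm (p q d m n : ℕ) (hn : 2 ≤ n)
    (WK WQ WV : Fin m → Fin d → ℝ) (WO : Fin d → Fin m → ℝ) (X : Mat d n) :
    mmul p q (toEF WO) (mmul p q (mmul p q (toEF WV) (permCols (swap12 n hn) X))
      (colSoftmax p q (mmul p q (fun u v => mmul p q (toEF WK) (permCols (swap12 n hn) X) v u)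
        (mmul p q (toEF WQ) (permCols (swap12 n hn) X)))))
    = permCols (swap12 n hn) (mmul p q (toEF WO) (mmul p q (mmul p q (toEF WV) X)
      (colSoftmax p q (mmul p q (fun u v => mmul p q (toEF WK) X v u)
        (mmul p q (toEF WQ) X))))) := by
  have hS : (mmul p q (fun u v => mmul p q (toEF WK) (permCols (swap12 n hn) X) v u)
        (mmul p q (toEF WQ) (permCols (swap12 n hn) X)))
      = fun u k => (mmul p q (fun u v => mmul p q (toEF WK) X v u)
        (mmul p q (toEF WQ) X)) (swap12 n hn u) (swap12 n hn k) := rfl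
  rw [hS, colSoftmax_perm2]
  have hV : mmul p q (toEF WV) (permCols (swap12 n hn) X)
      = permCols (swap12 n hn) (mmul p q (toEF WV) X) := rfl
  rw [hV, mmul_perm2]
  rfl

lemma attn_perm (p q h m r d n : ℕ) (hn : 2 ≤ n) (B : Block h m r d) (X : Mat d n) :
    attnApply p q B (permCols (swap12 n hn) X)
      = permCols (swap12 n hn) (attnApply p q B X) := by
  funext a b
  show fadd p q _ _ = fadd p q _ _
  refine congrArg₂ _ rfl (congrArg (fsum p q) (funext fun i => ?_))
  exact congrFun (congrFun (head_perm p q d m n hn (B.WK i) (B.WQ i) (B.WV i) (B.WO i) X) a) b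

lemma ff_perm (p q h m r d n : ℕ) (hn : 2 ≤ n) (B : Block h m r d) (X : Mat d n) :
    ffApply p q B (permCols (swap12 n hn) X)
      = permCols (swap12 n hn) (ffApply p q B X) := rfl

lemma blocks_perm (p q h m r d n : ℕ) (hn : 2 ≤ n) (L : List (Block h m r d)) (X : Mat d n) :
    blocksApply p q L (permCols (swap12 n hn) X)
      = permCols (swap12 n hn) (blocksApply p q L X) := by
  induction L generalizing X with
  | nil => rfl
  | cons B L ih =>
    show blocksApply p q L (Block.apply p q B (permCols (swap12 n hn) X))
      = permCols (swap12 n hn) (blocksApply p q L (Block.apply p q B X))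
    have : Block.apply p q B (permCols (swap12 n hn) X)
        = permCols (swap12 n hn) (Block.apply p q B X) := by
      unfold Block.apply
      rw [attn_perm, ff_perm]
    rw [this, ih]

end
end FPT


/-- Every floating-point transformer is `π_{(1,2)}^n`-equivariant. -/
theorem stmt3 (p q : ℕ) (hp : 2 ≤ p) (hpq : (p : ℤ) ≤ 2 ^ (q - 1) - 3)
    (din dout n : ℕ) (hdin : 0 < din) (hdout : 0 < dout) (hn : 2 ≤ n)
    (f : FPT.Mat din n → FPT.Mat dout n) (hf : FPT.IsTransformer p q din dout n f) :
    ∀ X : FPT.Mat din n, FPT.MatFin p q X →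
      f (FPT.permCols (FPT.swap12 n hn) X) = FPT.permCols (FPT.swap12 n hn) (f X) := by
  intro X _
  obtain ⟨h, m, r, d, L, Win, bin, Wout, bout, hh, hm, hr, hd, hL, hLv, hWin, hbin,
    hWout, hbout, hfeq⟩ := hf
  rw [hfeq, hfeq]
  have h1 : FPT.madd p q (FPT.mmul p q (FPT.toEF Win) (FPT.permCols (FPT.swap12 n hn) X))
        (fun i _ => .fin (bin i))
      = FPT.permCols (FPT.swap12 n hn)
        (FPT.madd p q (FPT.mmul p q (FPT.toEF Win) X) (fun i _ => .fin (bin i))) := rfl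
  rw [h1, FPT.blocks_perm]
  rfl
end

section
/- Let d_in, d_out, n ∈ ℕ with n ≥ 2 and Δ_n = {[x_1,…,x_n] ∈ 𝔽^{d_in×n} : x_i ≠ x_j for all i ≠ j}. If f* : Δ_n → 𝔽^{d_out×n} is π_{(1,2)}^n-equivariant, then there exists a function f̃ : 𝔽^{d_in} × 𝔽^{d_in×n} → 𝔽^{d_out} such that for every X = [x_1,…,x_n] ∈ Δ_n, f*(X) = [f̃(x_1,X),…,f̃(x_n,X)] = [f̃(x_1,π_{(1,2)}^n X),…,f̃(x_n,π_{(1,2)}^n X)]. -/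
open scoped Classical

/-- Lemma `diagonal-factorize`. A `π_{(1,2)}^n`-equivariant function on
`Δ_n` factors through a column-wise function `f̃(x_i, X)` that is insensitive to applying
`π_{(1,2)}^n` to its second argument. -/
theorem stmt6 (p q : ℕ) (hp : 2 ≤ p) (hpq : (p : ℤ) ≤ 2 ^ (q - 1) - 3)
    (din dout n : ℕ) (hdin : 0 < din) (hdout : 0 < dout) (hn : 2 ≤ n)
    (fstar : FPT.Mat din n → FPT.Mat dout n)
    (hequiv : ∀ X : FPT.Mat din n, FPT.MatFin p q X → FPT.DistinctCols X →
      fstar (FPT.permCols (FPT.swap12 n hn) X) = FPT.permCols (FPT.swap12 n hn) (fstar X)) :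
    ∃ ftil : (Fin din → FPT.EF) → FPT.Mat din n → Fin dout → FPT.EF,
      ∀ X : FPT.Mat din n, FPT.MatFin p q X → FPT.DistinctCols X →
        ∀ (j : Fin n) (i : Fin dout),
          fstar X i j = ftil (fun r => X r j) X i ∧
          fstar X i j = ftil (fun r => X r j) (FPT.permCols (FPT.swap12 n hn) X) i := by

  classical
  set π := FPT.swap12 n hn with hπ
  refine ⟨fun x Y i => if h : ∃ j : Fin n, ∀ r, Y r j = x r then fstar Y i h.choose
    else FPT.EF.nan, ?_⟩
  intro X hfin hdist j i
  constructor
  · have h : ∃ k : Fin n, ∀ r, X r k = (fun r => X r j) r := ⟨j, fun _ => rfl⟩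
    simp only [dif_pos h]
    have hk : h.choose = j := by
      by_contra hne
      obtain ⟨r, hr⟩ := hdist _ _ hne
      exact hr (h.choose_spec r)
    rw [hk]
  · have h : ∃ k : Fin n, ∀ r, FPT.permCols π X r k = (fun r => X r j) r :=
      ⟨π j, fun r => by simp [FPT.permCols, hπ, FPT.swap12, Equiv.swap_apply_self]⟩
    simp only [dif_pos h]
    have hk : h.choose = π j := by
      by_contra hne
      have hne' : π h.choose ≠ j := by
        intro he
        apply hne
        have := congrArg π he
        simpa [hπ, FPT.swap12, Equiv.swap_apply_self] using this
      obtain ⟨r, hr⟩ := hdist _ _ hne'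
      exact hr (h.choose_spec r)
    rw [hk, hequiv X hfin hdist]
    simp [FPT.permCols, hπ, FPT.swap12, Equiv.swap_apply_self]
end

section
/- Let n ≥ 2 and let f : S_n → [n]^{C(n,3)} be defined by f(π) = (argmax_{i∈{i_1,i_2,i_3}} π(i))_{1≤i_1<i_2<i_3≤n}, i.e. for each 3-element subset {i_1,i_2,i_3} of [n], f(π) records the unique element of {i_1,i_2,i_3} at which π attains its maximum over that set. Then for every x in the image f(S_n), the preimage f^{−1}(x) equals {π, π_{(1,2)}^n ∘ π} for some π ∈ S_n. Equivalently, for all π, φ ∈ S_n: f(π) = f(φ) if and only if φ = π or φ = π_{(1,2)}^n ∘ π. -/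
open scoped Classical

section Stmt7Aux

variable {n : ℕ}

private lemma stmt7_card_filter_lt (π : Equiv.Perm (Fin n)) (b : Fin n) :
    (Finset.univ.filter (fun a => π a < π b)).card = (π b : ℕ) := by
  have himg : Finset.univ.filter (fun a => π a < π b) = (Finset.Iio (π b)).image π.symm := by
    ext x
    simp only [Finset.mem_filter, Finset.mem_univ, true_and, Finset.mem_image, Finset.mem_Iio]
    constructor
    · intro h; exact ⟨π x, h, π.symm_apply_apply x⟩
    · rintro ⟨v, hv, rfl⟩; simpa using hv
  rw [himg, Finset.card_image_of_injective _ π.symm.injective, Fin.card_Iio]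

private lemma stmt7_keyA (π φ : Equiv.Perm (Fin n))
    (H2 : ∀ a b c : Fin n, a ≠ b → a ≠ c → b ≠ c →
      ((∀ k ∈ ({a, b, c} : Finset (Fin n)), π k ≤ π a) ↔
        (∀ k ∈ ({a, b, c} : Finset (Fin n)), φ k ≤ φ a)))
    {a b : Fin n} (hab : π a < π b) (h2 : 2 ≤ (π b : ℕ)) : φ a < φ b := by
  have hn3 : 2 < n := lt_of_le_of_lt h2 (π b).isLt
  set x0 : Fin n := ⟨0, by omega⟩ with hx0
  set x1 : Fin n := ⟨1, by omega⟩ with hx1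
  have hv0 : (x0 : ℕ) = 0 := rfl
  have hv1 : (x1 : ℕ) = 1 := rfl
  have hc0 : π (π.symm x0) = x0 := π.apply_symm_apply x0
  have hc1 : π (π.symm x1) = x1 := π.apply_symm_apply x1
  have hne : π.symm x0 ≠ π.symm x1 := by
    intro h
    have : x0 = x1 := π.symm.injective h
    have := congrArg Fin.val this
    omega
  obtain ⟨c, hca, hcb⟩ : ∃ c, c ≠ a ∧ π c < π b := by
    rcases eq_or_ne (π.symm x0) a with h | h
    · refine ⟨π.symm x1, by rw [← h]; exact hne.symm, ?_⟩
      rw [hc1, Fin.lt_def]; omega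
    · refine ⟨π.symm x0, h, ?_⟩
      rw [hc0, Fin.lt_def]; omega
  have hba : b ≠ a := fun h => absurd hab (by rw [h]; exact lt_irrefl _)
  have hbc : b ≠ c := fun h => absurd hcb (by rw [← h]; exact lt_irrefl _)
  have hac : a ≠ c := fun h => hca (h.symm)
  have hmax : ∀ k ∈ ({b, a, c} : Finset (Fin n)), π k ≤ π b := by
    intro k hk
    simp only [Finset.mem_insert, Finset.mem_singleton] at hk
    rcases hk with rfl | rfl | rfl
    · exact le_refl _
    · exact le_of_lt hab
    · exact le_of_lt hcb
  have hφ := (H2 b a c hba hbc (hac.symm ∘ Eq.symm)).mp hmax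
  have hφa : φ a ≤ φ b := hφ a (by simp)
  exact hφa.lt_of_ne (fun h => hab.ne (by rw [φ.injective h]))

private lemma stmt7_keyle (π φ : Equiv.Perm (Fin n))
    (H2 : ∀ a b c : Fin n, a ≠ b → a ≠ c → b ≠ c →
      ((∀ k ∈ ({a, b, c} : Finset (Fin n)), π k ≤ π a) ↔
        (∀ k ∈ ({a, b, c} : Finset (Fin n)), φ k ≤ φ a)))
    {b : Fin n} (h2 : 2 ≤ (π b : ℕ)) : (π b : ℕ) ≤ (φ b : ℕ) := by
  have hmap : ∀ a ∈ Finset.univ.filter (fun a => π a < π b), φ a ∈ Finset.Iio (φ b) := by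
    intro a ha
    simp only [Finset.mem_filter, Finset.mem_univ, true_and] at ha
    simpa using stmt7_keyA π φ H2 ha h2
  have hinj : Set.InjOn φ (Finset.univ.filter (fun a => π a < π b)) :=
    fun x _ y _ h => φ.injective h
  have := Finset.card_le_card_of_injOn φ hmap hinj
  rwa [stmt7_card_filter_lt, Fin.card_Iio] at this

end Stmt7Aux

/-- Lemma `three-max`. Knowing, for every triple `i₁ < i₂ < i₃`, at which
of the three indices `π` attains its maximum determines `π` up to composition with the
transposition `π_{(1,2)}^n`; i.e. `f(π) = f(φ)` iff `φ = π` or `φ = π_{(1,2)}^n ∘ π`. -/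
theorem stmt7 (n : ℕ) (hn : 2 ≤ n) (π φ : Equiv.Perm (Fin n)) :
    (∀ i₁ i₂ i₃ : Fin n, i₁ < i₂ → i₂ < i₃ →
      ∀ j ∈ ({i₁, i₂, i₃} : Finset (Fin n)),
        ((∀ k ∈ ({i₁, i₂, i₃} : Finset (Fin n)), π k ≤ π j) ↔
          (∀ k ∈ ({i₁, i₂, i₃} : Finset (Fin n)), φ k ≤ φ j)))
    ↔ (φ = π ∨ φ = FPT.swap12 n hn * π) := by
  have hn0 : 0 < n := by omega
  set x0 : Fin n := ⟨0, by omega⟩ with hx0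
  set x1 : Fin n := ⟨1, by omega⟩ with hx1
  have hv0 : (x0 : ℕ) = 0 := rfl
  have hv1 : (x1 : ℕ) = 1 := rfl
  have hs : FPT.swap12 n hn = Equiv.swap x0 x1 := rfl
  have hx01 : x0 ≠ x1 := by
    intro h; have := congrArg Fin.val h; omega
  have hsmall : ∀ y : Fin n, (y : ℕ) < 2 → y = x0 ∨ y = x1 := by
    intro y hy
    have : (y : ℕ) = 0 ∨ (y : ℕ) = 1 := by omega
    rcases this with h | h
    · exact Or.inl (Fin.ext (by omega))
    · exact Or.inr (Fin.ext (by omega))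
  constructor
  · intro H
    have H2 : ∀ a b c : Fin n, a ≠ b → a ≠ c → b ≠ c →
        ((∀ k ∈ ({a, b, c} : Finset (Fin n)), π k ≤ π a) ↔
          (∀ k ∈ ({a, b, c} : Finset (Fin n)), φ k ≤ φ a)) := by
      intro a b c hab hac hbc
      have key : ∀ i₁ i₂ i₃ : Fin n, i₁ < i₂ → i₂ < i₃ →
          ({i₁, i₂, i₃} : Finset (Fin n)) = {a, b, c} →
          ((∀ k ∈ ({a, b, c} : Finset (Fin n)), π k ≤ π a) ↔
            (∀ k ∈ ({a, b, c} : Finset (Fin n)), φ k ≤ φ a)) := by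
        intro i₁ i₂ i₃ h12 h23 hS
        have := H i₁ i₂ i₃ h12 h23
        rw [hS] at this
        exact this a (by simp)
      rcases lt_trichotomy a b with h1 | h1 | h1
      · rcases lt_trichotomy b c with h2 | h2 | h2
        · exact key a b c h1 h2 rfl
        · exact absurd h2 (by simp [hbc])
        · rcases lt_trichotomy a c with h3 | h3 | h3
          · exact key a c b h3 h2 (by ext x; simp; tauto)
          · exact absurd h3 (by simp [hac])
          · exact key c a b h3 h1 (by ext x; simp; tauto)
      · exact absurd h1 hab
      · rcases lt_trichotomy a c with h2 | h2 | h2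
        · exact key b a c h1 h2 (by ext x; simp; tauto)
        · exact absurd h2 hac
        · rcases lt_trichotomy b c with h3 | h3 | h3
          · exact key b c a h3 h2 (by ext x; simp; tauto)
          · exact absurd h3 hbc
          · exact key c b a h3 h1 (by ext x; simp; tauto)
    have H2sym : ∀ a b c : Fin n, a ≠ b → a ≠ c → b ≠ c →
        ((∀ k ∈ ({a, b, c} : Finset (Fin n)), φ k ≤ φ a) ↔
          (∀ k ∈ ({a, b, c} : Finset (Fin n)), π k ≤ π a)) :=
      fun a b c h1 h2 h3 => (H2 a b c h1 h2 h3).symm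
    have heq : ∀ b : Fin n, 2 ≤ (π b : ℕ) → φ b = π b := by
      intro b h2
      have h1 := stmt7_keyle π φ H2 h2
      have h3 := stmt7_keyle φ π H2sym (le_trans h2 h1)
      exact Fin.ext (le_antisymm h3 h1)
    have heq2 : ∀ b : Fin n, 2 ≤ (φ b : ℕ) → π b = φ b := by
      intro b h2
      have h1 := stmt7_keyle φ π H2sym h2
      have h3 := stmt7_keyle π φ H2 (le_trans h2 h1)
      exact Fin.ext (le_antisymm h3 h1)
    have h0' : (φ (π.symm x0) : ℕ) < 2 := by
      by_contra h
      push_neg at h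
      have := heq2 _ h
      rw [π.apply_symm_apply] at this
      have := congrArg Fin.val this
      omega
    have h1' : (φ (π.symm x1) : ℕ) < 2 := by
      by_contra h
      push_neg at h
      have := heq2 _ h
      rw [π.apply_symm_apply] at this
      have := congrArg Fin.val this
      omega
    have hφne : φ (π.symm x0) ≠ φ (π.symm x1) := by
      intro h
      exact hx01 (π.symm.injective (φ.injective h))
    rcases hsmall _ h0' with hA | hA
    · have hB : φ (π.symm x1) = x1 := by
        rcases hsmall _ h1' with hB | hB
        · exact absurd (hA.trans hB.symm) hφne
        · exact hB
      left
      refine Equiv.ext fun i => ?_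
      rcases Nat.lt_or_ge (π i : ℕ) 2 with hv | hv
      · rcases hsmall _ hv with h | h
        · have hi : i = π.symm x0 := by rw [← h, Equiv.symm_apply_apply]
          rw [hi, hA, Equiv.apply_symm_apply]
        · have hi : i = π.symm x1 := by rw [← h, Equiv.symm_apply_apply]
          rw [hi, hB, Equiv.apply_symm_apply]
      · exact heq i hv
    · have hA1 : φ (π.symm x0) = x1 := hA
      have hB : φ (π.symm x1) = x0 := by
        rcases hsmall _ h1' with hB | hB
        · exact hB
        · exact absurd (hA1.trans hB.symm) hφne
      right
      rw [hs]
      refine Equiv.ext fun i => ?_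
      show φ i = Equiv.swap x0 x1 (π i)
      rcases Nat.lt_or_ge (π i : ℕ) 2 with hv | hv
      · rcases hsmall _ hv with h | h
        · have hi : i = π.symm x0 := by rw [← h, Equiv.symm_apply_apply]
          rw [hi, hA1, Equiv.apply_symm_apply, Equiv.swap_apply_left]
        · have hi : i = π.symm x1 := by rw [← h, Equiv.symm_apply_apply]
          rw [hi, hB, Equiv.apply_symm_apply, Equiv.swap_apply_right]
      · have hne0 : π i ≠ x0 := by
          intro h; have := congrArg Fin.val h; omega
        have hne1 : π i ≠ x1 := by
          intro h; have := congrArg Fin.val h; omega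
        rw [Equiv.swap_apply_of_ne_of_ne hne0 hne1]
        exact heq i hv
  · have swle : ∀ x y : Fin n, 2 ≤ (y : ℕ) → x ≤ y →
        Equiv.swap x0 x1 x ≤ Equiv.swap x0 x1 y := by
      intro x y hy hxy
      have hy0 : y ≠ x0 := by
        intro h; have := congrArg Fin.val h; omega
      have hy1 : y ≠ x1 := by
        intro h; have := congrArg Fin.val h; omega
      rw [Equiv.swap_apply_of_ne_of_ne hy0 hy1]
      rcases eq_or_ne x x0 with rfl | h0
      · rw [Equiv.swap_apply_left, Fin.le_def]
        omega
      rcases eq_or_ne x x1 with rfl | h1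
      · rw [Equiv.swap_apply_right, Fin.le_def]
        omega
      · rw [Equiv.swap_apply_of_ne_of_ne h0 h1]
        exact hxy
    rintro (rfl | rfl)
    · intro i₁ i₂ i₃ _ _ j _; exact Iff.rfl
    · intro i₁ i₂ i₃ h12 h23 j hj
      have fwd : ∀ ψ : Equiv.Perm (Fin n),
          (∀ k ∈ ({i₁, i₂, i₃} : Finset (Fin n)), ψ k ≤ ψ j) →
          ∀ k ∈ ({i₁, i₂, i₃} : Finset (Fin n)),
            Equiv.swap x0 x1 (ψ k) ≤ Equiv.swap x0 x1 (ψ j) := by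
        intro ψ hmax k hk
        have h13 : i₁ < i₃ := lt_trans h12 h23
        have hne12 : (ψ i₁ : ℕ) ≠ (ψ i₂ : ℕ) :=
          fun h => h12.ne (ψ.injective (Fin.ext h))
        have hne13 : (ψ i₁ : ℕ) ≠ (ψ i₃ : ℕ) :=
          fun h => h13.ne (ψ.injective (Fin.ext h))
        have hne23 : (ψ i₂ : ℕ) ≠ (ψ i₃ : ℕ) :=
          fun h => h23.ne (ψ.injective (Fin.ext h))
        have hm1 : (ψ i₁ : ℕ) ≤ (ψ j : ℕ) := Fin.le_def.mp (hmax i₁ (by simp))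
        have hm2 : (ψ i₂ : ℕ) ≤ (ψ j : ℕ) := Fin.le_def.mp (hmax i₂ (by simp))
        have hm3 : (ψ i₃ : ℕ) ≤ (ψ j : ℕ) := Fin.le_def.mp (hmax i₃ (by simp))
        have hjmem : (ψ j : ℕ) = ψ i₁ ∨ (ψ j : ℕ) = ψ i₂ ∨ (ψ j : ℕ) = ψ i₃ := by
          simp only [Finset.mem_insert, Finset.mem_singleton] at hj
          rcases hj with rfl | rfl | rfl
          · exact Or.inl rfl
          · exact Or.inr (Or.inl rfl)
          · exact Or.inr (Or.inr rfl)
        have h2 : 2 ≤ (ψ j : ℕ) := by omega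
        exact swle _ _ h2 (hmax k hk)
      constructor
      · intro h k hk
        exact fwd π h k hk
      · intro h k hk
        have := fwd (FPT.swap12 n hn * π) h k hk
        rw [hs] at this
        simpa [Equiv.Perm.mul_apply, Equiv.swap_apply_self] using this
end

section
/- Let d_in, d_out, n ∈ ℕ and let f* : 𝔽^{d_in×n} → 𝔽^{d_out×n} be permutation-equivariant. Then there exists a function f̃ : 𝔽^{d_in} × (ℕ∪{0})^{𝔽^{d_in}} → 𝔽^{d_out} such that for every X = [x_1,…,x_n] ∈ 𝔽^{d_in×n}, f*(X) = [f̃(x_1, c_X),…,f̃(x_n, c_X)], where c_X : 𝔽^{d_in} → ℕ∪{0} is the count function assigning to each z ∈ 𝔽^{d_in} the number of columns of X equal to z. -/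
open scoped Classical

noncomputable section Aux

open Finset

/-- Count function of the columns of a matrix. -/
def cnt {din n : ℕ} (X : FPT.Mat din n) : (Fin din → FPT.EF) → ℕ :=
  fun z => (Finset.univ.filter (fun k : Fin n => (fun r => X r k) = z)).card

lemma card_fiber {n : ℕ} {β : Type*} (f : Fin n → β) (c : β) :
    Fintype.card (f ⁻¹' {c}) = (Finset.univ.filter (fun k => f k = c)).card := by
  rw [← Set.toFinset_card]
  congr 1
  ext k
  simp [Set.mem_toFinset]

lemma exists_perm {din n : ℕ} (X X' : FPT.Mat din n)
    (hc : cnt X = cnt X') :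
    ∃ π : Equiv.Perm (Fin n), ∀ k i, X' i k = X i (π k) := by
  have key : ∀ c, Fintype.card ((fun k : Fin n => (fun r => X' r k)) ⁻¹' {c})
      = Fintype.card ((fun k : Fin n => (fun r => X r k)) ⁻¹' {c}) := by
    intro c
    rw [card_fiber, card_fiber]
    have h := (congrFun hc c).symm
    unfold cnt at h
    convert h using 2 <;> congr 1
  have e : ∀ c, ((fun k : Fin n => (fun r => X' r k)) ⁻¹' {c}) ≃
      ((fun k : Fin n => (fun r => X r k)) ⁻¹' {c}) := fun c =>
    Fintype.equivOfCardEq (key c)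
  refine ⟨Equiv.ofFiberEquiv e, ?_⟩
  intro k i
  have := Equiv.ofFiberEquiv_map e k
  exact congrFun this.symm i

end Aux

/-- Lemma `permutation-factorize`. A permutation-equivariant function
factors through a column-wise function of the token and the multiset (count function) of
the columns of the input. -/
theorem stmt8 (p q : ℕ) (hp : 2 ≤ p) (hpq : (p : ℤ) ≤ 2 ^ (q - 1) - 3)
    (din dout n : ℕ) (hdin : 0 < din) (hdout : 0 < dout) (hn : 0 < n)
    (fstar : FPT.Mat din n → FPT.Mat dout n)
    (hequiv : ∀ (π : Equiv.Perm (Fin n)) (X : FPT.Mat din n), FPT.MatFin p q X →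
      fstar (FPT.permCols π X) = FPT.permCols π (fstar X)) :
    ∃ ftil : (Fin din → FPT.EF) → ((Fin din → FPT.EF) → ℕ) → Fin dout → FPT.EF,
      ∀ X : FPT.Mat din n, FPT.MatFin p q X →
        ∀ (j : Fin n) (i : Fin dout),
          fstar X i j =
            ftil (fun r => X r j)
              (fun z => (Finset.univ.filter (fun k : Fin n => (fun r => X r k) = z)).card)
              i := by
  classical
  -- Lemma A: fstar is constant on equal columns
  have lemA : ∀ (Y : FPT.Mat din n), FPT.MatFin p q Y → ∀ j k : Fin n,
      (fun r => Y r j) = (fun r => Y r k) → ∀ i, fstar Y i j = fstar Y i k := by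
    intro Y hY j k hjk i
    by_cases hne : j = k
    · rw [hne]
    · set σ := Equiv.swap j k with hσ
      have hfix : FPT.permCols σ Y = Y := by
        funext a l
        unfold FPT.permCols
        rcases eq_or_ne l j with rfl | hlj
        · rw [hσ, Equiv.swap_apply_left]
          exact (congrFun hjk a).symm
        rcases eq_or_ne l k with rfl | hlk
        · rw [hσ, Equiv.swap_apply_right]
          exact congrFun hjk a
        · rw [hσ, Equiv.swap_apply_of_ne_of_ne hlj hlk]
      have := hequiv σ Y hY
      rw [hfix] at this
      have h2 := congrFun (congrFun this i) j
      unfold FPT.permCols at h2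
      rw [hσ, Equiv.swap_apply_left] at h2
      exact h2
  refine ⟨fun x c i =>
    if h : ∃ Y : FPT.Mat din n, FPT.MatFin p q Y ∧ cnt Y = c ∧
        ∃ j : Fin n, (fun r => Y r j) = x
    then fstar h.choose i h.choose_spec.2.2.choose else FPT.EF.nan, ?_⟩
  intro X hX j i
  have h : ∃ Y : FPT.Mat din n, FPT.MatFin p q Y ∧ cnt Y = cnt X ∧
      ∃ j' : Fin n, (fun r => Y r j') = (fun r => X r j) := ⟨X, hX, rfl, j, rfl⟩
  have hcnt : (fun z => (Finset.univ.filter (fun k : Fin n => (fun r => X r k) = z)).card)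
      = cnt X := rfl
  rw [hcnt]
  simp only [dif_pos h]
  set Y := h.choose with hY
  obtain ⟨hYfin, hYcnt, hYj⟩ := h.choose_spec
  set j0 := hYj.choose with hj0
  have hcol : (fun r => Y r j0) = (fun r => X r j) := hYj.choose_spec
  -- find permutation π with X i k = Y i (π k)
  obtain ⟨π, hπ⟩ := exists_perm Y X hYcnt
  have hXe : X = FPT.permCols π Y := by
    funext a k; exact hπ k a
  have hstep : fstar X i j = fstar Y i (π j) := by
    rw [hXe, hequiv π Y hYfin]
    rfl
  rw [hstep]
  apply lemA Y hYfin
  have : (fun r => Y r (π j)) = (fun r => X r j) := by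
    funext r; exact (hπ j r).symm
  rw [this, ← hcol]
end

section
/- The left-associative floating-point partial sums s_k = ⊕_{i=1}^k 1^+ (with s_0 = 0), where 1^+ = 1 + 2^{−p} is the successor of 1 in 𝔽, satisfy: (i) s_0, s_1, …, s_{3·2^p−1} are pairwise distinct; (ii) s_{3·2^p−1+n} = 2^{p+2} for every n ∈ ℕ∪{0}. Explicitly, s_k = 0 for k=0, 1^+ for k=1, 2^+ for k=2, 3^{++} for k=3, k^+ for 4 ≤ k ≤ 2^p, k+1 for 2^p+1 ≤ k ≤ 2^{p+1}−1, and 2^{p+1} + 2(k − 2^{p+1} + 1) for 2^{p+1} ≤ k ≤ 3·2^p − 1. -/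
open scoped Classical

/-!
Each partial sum is a float, and `s (k+1)` is the float nearest to `s k + 1⁺`, recognised as the
float closer than half an ulp; the only tie is at `k = 2`, where ties-to-even rounds up. In the
binade `[2^L, 2^(L+1))` with `L ≤ p` the ulp is `2^(L-p)` and `s k = k + 2^(L-p)` is the successor
of `k`; in `[2^p, 2^(p+1))` the ulp is `1`, so the `2^(-p)` of `1⁺` is lost and `s k = k + 1`; in
`[2^(p+1), 2^(p+2))` the ulp is `2` and `1⁺` is rounded up to `2`; at `2^(p+2)` the ulp is `4`
and `1⁺` is rounded away. The sums increase strictly until they reach `2^(p+2)`, hence are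
pairwise distinct up to that point.
-/

namespace FPT

variable {p q : ℕ}

section Rounding

theorem two_zpow_natCast_sub (L : ℕ) :
    (2 : ℝ) ^ ((L : ℤ) - p) = 2 ^ L * 2 ^ (-(p : ℤ)) := by
  rw [sub_eq_add_neg, zpow_add₀ two_ne_zero, zpow_natCast]

theorem two_pow_mul_two_zpow_neg : (2 : ℝ) ^ p * 2 ^ (-(p : ℤ)) = 1 := by
  rw [zpow_neg, zpow_natCast, mul_inv_cancel₀ (by positivity)]

theorem two_zpow_sub_one_add_self (a : ℤ) : (2 : ℝ) ^ (a - 1) + 2 ^ (a - 1) = 2 ^ a := by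
  rw [← two_mul, ← zpow_one_add₀ two_ne_zero, add_sub_cancel]

theorem exists_eq_intCast_mul_or_abs_le_of_mem_Fset {z : ℝ} (hz : z ∈ Fset p q) (E : ℤ) :
    (∃ k : ℤ, z = k * 2 ^ (E - p)) ∨ |z| ≤ 2 ^ E - 2 ^ (E - p - 1) := by
  obtain ⟨m, e, hm, -, -, -, rfl⟩ := hz
  rcases le_or_gt E e with h | h
  · left
    obtain ⟨d, hd⟩ := Int.eq_ofNat_of_zero_le (sub_nonneg.2 h)
    refine ⟨m * 2 ^ d, ?_⟩
    rw [show e - p = d + (E - p) by omega, zpow_add₀ two_ne_zero, zpow_natCast]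
    push_cast
    ring
  · right
    have hm' : |(m : ℝ)| ≤ 2 ^ (p + 1) - 1 := by exact_mod_cast hm
    have he : (2 : ℝ) ^ (e - p) ≤ 2 ^ (E - p - 1) := zpow_le_zpow_right₀ one_le_two (by omega)
    have hpow : (2 : ℝ) ^ (p + 1) * 2 ^ (E - p - 1) = 2 ^ E := by
      rw [← zpow_natCast, ← zpow_add₀ two_ne_zero]
      congr 1
      push_cast
      ring
    rw [abs_mul, abs_of_pos (zpow_pos (two_pos (α := ℝ)) _)]
    calc |(m : ℝ)| * 2 ^ (e - p) ≤ (2 ^ (p + 1) - 1) * 2 ^ (E - p - 1) :=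
          mul_le_mul hm' he (zpow_pos (two_pos (α := ℝ)) _).le ((abs_nonneg _).trans hm')
      _ = 2 ^ E - 2 ^ (E - p - 1) := by rw [sub_mul, hpow, one_mul]

theorem exists_two_pow_le_of_abs_sub_le {E : ℤ} {x z : ℝ} (hx : 2 ^ E < x)
    (hz : z ∈ Fset p q) (hd : |x - z| ≤ 2 ^ (E - p - 1)) :
    ∃ k : ℤ, 2 ^ p ≤ k ∧ z = k * 2 ^ (E - p) := by
  have hhalf := two_zpow_sub_one_add_self (E - p)
  rcases exists_eq_intCast_mul_or_abs_le_of_mem_Fset hz E with ⟨k, rfl⟩ | hsmall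
  · refine ⟨k, ?_, rfl⟩
    by_contra! hk
    have hk' : (k : ℝ) ≤ 2 ^ p - 1 := by exact_mod_cast Int.le_sub_one_of_lt hk
    have hpow : (2 : ℝ) ^ p * 2 ^ (E - p) = 2 ^ E := by
      rw [← zpow_natCast, ← zpow_add₀ two_ne_zero, add_sub_cancel]
    have := mul_le_mul_of_nonneg_right hk' (zpow_pos (two_pos (α := ℝ)) (E - p)).le
    linarith [le_abs_self (x - k * 2 ^ (E - p)), zpow_pos (two_pos (α := ℝ)) (E - p - 1)]
  · linarith [le_abs_self z, le_abs_self (x - z), zpow_pos (two_pos (α := ℝ)) (E - p - 1)]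

theorem eq_of_abs_sub_add_abs_sub_lt {E : ℤ} {x y z : ℝ} (hx : 2 ^ E < x)
    (hy : y ∈ Fset p q) (hz : z ∈ Fset p q) (hyd : |x - y| ≤ 2 ^ (E - p - 1))
    (hzd : |x - z| ≤ 2 ^ (E - p - 1)) (h : |x - y| + |x - z| < 2 ^ (E - p)) : y = z := by
  obtain ⟨m, -, rfl⟩ := exists_two_pow_le_of_abs_sub_le hx hy hyd
  obtain ⟨k, -, rfl⟩ := exists_two_pow_le_of_abs_sub_le hx hz hzd
  by_contra hne
  have hkm : (1 : ℝ) ≤ |(m : ℝ) - k| := by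
    rw [← Int.cast_sub, ← Int.cast_abs]
    exact_mod_cast Int.one_le_abs (sub_ne_zero.2 fun h => hne (by rw [h]))
  have hsep : 2 ^ (E - p) ≤ |(m : ℝ) * 2 ^ (E - p) - k * 2 ^ (E - p)| := by
    rw [← sub_mul, abs_mul, abs_of_pos (zpow_pos (two_pos (α := ℝ)) _)]
    nlinarith [zpow_pos (two_pos (α := ℝ)) (E - p)]
  have := abs_sub_le (m * 2 ^ (E - p) : ℝ) x (k * 2 ^ (E - p))
  rw [abs_sub_comm _ x] at this
  linarith

theorem le_Omega_of_mem_Fset {z : ℝ} (hz : z ∈ Fset p q) : z ≤ Omega p q := by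
  obtain ⟨m, e, hm, -, he, -, rfl⟩ := hz
  have hm' : (m : ℝ) ≤ 2 ^ (p + 1) - 1 := by exact_mod_cast (le_abs_self m).trans hm
  have hΩ : Omega p q = (2 ^ (p + 1) - 1) * 2 ^ (emax q - p) := by
    rw [Omega, sub_eq_add_neg (emax q), zpow_add₀ two_ne_zero, pow_succ]
    linear_combination (-2 * 2 ^ emax q) * two_pow_mul_two_zpow_neg (p := p)
  rw [hΩ]
  exact mul_le_mul hm' (zpow_le_zpow_right₀ one_le_two (by omega))
    (zpow_pos (two_pos (α := ℝ)) _).le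
    (by linarith [one_le_pow₀ (M₀ := ℝ) (n := p + 1) one_le_two])

theorem rnd_eq_fin_of_roundsTo {x y : ℝ} (hx : |x| < thr p q) (hy : RoundsTo p q x y)
    (huniq : ∀ z, RoundsTo p q x z → z = y) : rnd p q x = .fin y := by
  rw [abs_lt] at hx
  unfold rnd
  rw [if_neg (by linarith), if_neg (by linarith), huniq _ (Classical.epsilon_spec ⟨y, hy⟩)]

theorem abs_lt_thr {x y : ℝ} (hy : y ∈ Fset p q) (hx : 0 < x)
    (hd : x - y < 2 ^ (emax q - p - 1)) : |x| < thr p q := by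
  have := le_Omega_of_mem_Fset hy
  rw [abs_lt, thr]
  constructor <;> linarith

theorem rnd_eq_of_abs_sub_lt {E : ℤ} {x y : ℝ} (hy : y ∈ Fset p q) (hE : E ≤ emax q)
    (hx : 2 ^ E < x) (hd : |x - y| < 2 ^ (E - p - 1)) : rnd p q x = .fin y := by
  have hhalf := two_zpow_sub_one_add_self (E - p)
  have hclose : ∀ z ∈ Fset p q, |x - z| ≤ |x - y| → z = y := fun z hz h =>
    (eq_of_abs_sub_add_abs_sub_lt hx hy hz hd.le (h.trans hd.le) (by linarith)).symm
  have hmin : ∀ z ∈ Fset p q, |x - y| ≤ |x - z| := fun z hz => by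
    by_contra! h
    exact h.ne (by rw [hclose z hz h.le])
  have hlt : x - y < 2 ^ (emax q - p - 1) :=
    (le_abs_self _).trans_lt (hd.trans_le (zpow_le_zpow_right₀ one_le_two (by omega)))
  exact rnd_eq_fin_of_roundsTo (abs_lt_thr hy ((zpow_pos (two_pos (α := ℝ)) E).trans hx) hlt)
    ⟨hy, hmin, Or.inl fun z hz h => hclose z hz h.le⟩ fun z hz => hclose z hz.1 (hz.2.1 y hy)

theorem exists_normal_repr {m : ℤ} (hm₁ : 2 ^ p ≤ m) (hm₂ : m ≤ 2 ^ (p + 1)) (E : ℤ) :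
    ∃ n e : ℤ, 2 ^ p ≤ n ∧ n ≤ 2 ^ (p + 1) - 1 ∧ E ≤ e ∧ e ≤ E + 1 ∧
      (m : ℝ) * 2 ^ (E - p) = n * 2 ^ (e - p) ∧ (2 ∣ m → 1 ≤ p → 2 ∣ n) := by
  rcases hm₂.lt_or_eq with hlt | rfl
  · exact ⟨m, E, hm₁, by omega, le_rfl, by omega, rfl, fun h _ => h⟩
  · refine ⟨2 ^ p, E + 1, le_rfl, ?_, by omega, le_rfl, ?_,
      fun _ hp => dvd_pow_self 2 (by omega)⟩
    · rw [pow_succ]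
      linarith [one_le_pow₀ (M₀ := ℤ) (n := p) one_le_two]
    · rw [show E + 1 - p = 1 + (E - p) by ring, zpow_add₀ two_ne_zero]
      push_cast
      ring

theorem intCast_mul_two_zpow_mem_Fset {m E : ℤ} (hm₁ : 2 ^ p ≤ m) (hm₂ : m ≤ 2 ^ (p + 1))
    (hE₁ : emin q ≤ E) (hE₂ : E < emax q) : (m : ℝ) * 2 ^ (E - p) ∈ Fset p q := by
  obtain ⟨n, e, hn₁, hn₂, he₁, he₂, heq, -⟩ := exists_normal_repr hm₁ hm₂ E
  have hn : |n| = n := abs_of_nonneg ((pow_nonneg zero_le_two p).trans hn₁)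
  exact ⟨n, e, by rwa [hn], by omega, by omega, Or.inl (by rwa [hn]), heq⟩

theorem evenMantissa_intCast_mul_two_zpow (hp : 1 ≤ p) {m E : ℤ} (hm₁ : 2 ^ p ≤ m)
    (hm₂ : m ≤ 2 ^ (p + 1)) (hm : 2 ∣ m) (hE₁ : emin q ≤ E) (hE₂ : E < emax q) :
    EvenMantissa p q ((m : ℝ) * 2 ^ (E - p)) := by
  obtain ⟨n, e, hn₁, hn₂, he₁, he₂, heq, hn⟩ := exists_normal_repr hm₁ hm₂ E
  have habs : |n| = n := abs_of_nonneg ((pow_nonneg zero_le_two p).trans hn₁)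
  exact ⟨n, e, by rwa [habs], by omega, by omega, Or.inl (by rwa [habs]), heq, hn hm hp⟩

theorem EvenMantissa.mem_Fset {y : ℝ} (hy : EvenMantissa p q y) : y ∈ Fset p q :=
  let ⟨m, e, h₁, h₂, h₃, h₄, h₅, _⟩ := hy
  ⟨m, e, h₁, h₂, h₃, h₄, h₅⟩

theorem intCast_mul_two_pow_eq {a c b : ℤ} {d : ℕ} (h : (a : ℝ) * 2 ^ (d + b) = c * 2 ^ b) :
    a * 2 ^ d = c := by
  rw [zpow_add₀ two_ne_zero, zpow_natCast, ← mul_assoc] at h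
  exact_mod_cast mul_right_cancel₀ (zpow_pos (two_pos (α := ℝ)) b).ne' h

/-- `k·2^(E-p)` with odd `k ≥ 2^p` has no other representation with `|m| < 2^(p+1)`. -/
theorem not_evenMantissa_of_odd {E k : ℤ} (hk : Odd k) (hkp : 2 ^ p ≤ k) :
    ¬ EvenMantissa p q (k * 2 ^ (E - p)) := by
  rintro ⟨m, e, hm, -, -, -, heq, hm2⟩
  obtain ⟨r, rfl⟩ := hk
  rcases le_or_gt e E with h | h
  · obtain ⟨d, hd⟩ := Int.eq_ofNat_of_zero_le (sub_nonneg.2 h)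
    rw [show E - p = d + (e - p) by omega] at heq
    have hkm := intCast_mul_two_pow_eq heq
    rcases d with _ | d
    · omega
    · have hle : 2 * r + 1 ≤ (2 * r + 1) * 2 ^ d :=
        le_mul_of_one_le_right (by linarith [pow_pos (two_pos (α := ℤ)) p])
          (one_le_pow₀ one_le_two)
      rw [pow_succ] at hm hkm
      linarith [le_abs_self m]
  · obtain ⟨d, hd⟩ := Int.eq_ofNat_of_zero_le (sub_nonneg.2 h.le)
    rw [show e - p = (d - 1 + 1 : ℕ) + (E - p) by omega] at heq
    have hmk := intCast_mul_two_pow_eq heq.symm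
    have : (2 : ℤ) ∣ 2 * r + 1 := ⟨m * 2 ^ (d - 1), by rw [← hmk, pow_succ]; ring⟩
    omega

theorem rnd_eq_of_abs_sub_eq {E : ℤ} {x y : ℝ} (hy : EvenMantissa p q y) (hE : E < emax q)
    (hx : 2 ^ E < x) (hd : |x - y| = 2 ^ (E - p - 1)) : rnd p q x = .fin y := by
  have hyF := hy.mem_Fset
  have hhalf := two_zpow_sub_one_add_self (E - p)
  have hmin : ∀ z ∈ Fset p q, |x - y| ≤ |x - z| := fun z hz => by
    by_contra! h
    have := eq_of_abs_sub_add_abs_sub_lt hx hyF hz hd.le (h.le.trans hd.le) (by linarith)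
    exact h.ne (by rw [this])
  have hlt : x - y < 2 ^ (emax q - p - 1) := by
    have := zpow_lt_zpow_right₀ (one_lt_two (α := ℝ))
      (show E - p - 1 < emax q - p - 1 by omega)
    linarith [le_abs_self (x - y)]
  refine rnd_eq_fin_of_roundsTo (abs_lt_thr hyF ((zpow_pos (two_pos (α := ℝ)) E).trans hx) hlt)
    ⟨hyF, hmin, Or.inr hy⟩ ?_
  rintro w ⟨hwF, hwmin, hwalt⟩
  have hw : |x - w| = |x - y| := le_antisymm (hwmin y hyF) (hmin w hwF)
  obtain ⟨k, hk, rfl⟩ := exists_two_pow_le_of_abs_sub_le hx hwF (hw.trans hd).le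
  obtain ⟨m, hm, rfl⟩ := exists_two_pow_le_of_abs_sub_le hx hyF hd.le
  by_contra hne
  have hwE : EvenMantissa p q (k * 2 ^ (E - p)) :=
    hwalt.resolve_left fun h => hne (h _ hyF hw.symm).symm
  -- two adjacent grid points cannot both have an even last bit
  have hkm : |(k : ℝ) - m| ≤ 1 := by
    have := abs_sub_le (k * 2 ^ (E - p) : ℝ) x (m * 2 ^ (E - p))
    rw [abs_sub_comm _ x, hw, hd, ← sub_mul, abs_mul,
      abs_of_pos (zpow_pos (two_pos (α := ℝ)) _)] at this
    nlinarith [zpow_pos (two_pos (α := ℝ)) (E - p)]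
  have hkm' : k - m = 1 ∨ k - m = -1 := by
    rw [← Int.cast_sub, ← Int.cast_abs] at hkm
    have habs : |k - m| ≤ 1 := by exact_mod_cast hkm
    have : k ≠ m := fun h => hne (by rw [h])
    rw [abs_le] at habs
    omega
  rcases Int.even_or_odd m with ⟨r, hr⟩ | hmo
  · exact not_evenMantissa_of_odd (Int.odd_iff.2 (by omega)) hk hwE
  · exact not_evenMantissa_of_odd hmo hm hy

theorem succF_eq_add_two_zpow {E n : ℤ} {y : ℝ} (hy : y = n * 2 ^ (E - p)) (h : 2 ^ E ≤ y)
    (hs : y + 2 ^ (E - p) ∈ Fset p q) : succF p q y = y + 2 ^ (E - p) := by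
  have hg := zpow_pos (two_pos (α := ℝ)) (E - p)
  refine IsLeast.csInf_eq ⟨⟨hs, by linarith⟩, ?_⟩
  rintro z ⟨hz, hyz⟩
  rcases exists_eq_intCast_mul_or_abs_le_of_mem_Fset hz E with ⟨k, rfl⟩ | hsmall
  · subst hy
    have hnk : n < k := by exact_mod_cast (mul_lt_mul_iff_of_pos_right hg).1 hyz
    have : (n : ℝ) + 1 ≤ k := by exact_mod_cast hnk
    nlinarith
  · linarith [le_abs_self z, zpow_pos (two_pos (α := ℝ)) (E - p - 1)]

end Rounding

section PartialSums

theorem emin_nonpos (hpq : (p : ℤ) ≤ 2 ^ (q - 1) - 3) : emin q ≤ 0 := by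
  unfold emin
  omega

theorem add_two_le_emax (hpq : (p : ℤ) ≤ 2 ^ (q - 1) - 3) : (p : ℤ) + 2 ≤ emax q := by
  unfold emax
  omega

theorem mem_Fset_of_eq_intCast_mul (hpq : (p : ℤ) ≤ 2 ^ (q - 1) - 3) {y : ℝ} {m : ℤ}
    {E : ℕ} (hm₁ : 2 ^ p ≤ m) (hm₂ : m ≤ 2 ^ (p + 1)) (hE : E ≤ p + 1)
    (hy : y = m * 2 ^ E * 2 ^ (-(p : ℤ))) : y ∈ Fset p q := by
  have := emin_nonpos hpq
  have := add_two_le_emax hpq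
  rw [hy, mul_assoc, ← two_zpow_natCast_sub]
  exact intCast_mul_two_zpow_mem_Fset hm₁ hm₂ (by omega) (by omega)

theorem rnd_eq_of_abs_sub_lt_two_pow (hpq : (p : ℤ) ≤ 2 ^ (q - 1) - 3) {E : ℕ} {x y : ℝ}
    (hE : E ≤ p + 2) (hy : y ∈ Fset p q) (hx : 2 ^ E < x)
    (hd : |x - y| < 2 ^ E * 2 ^ (-(p : ℤ)) / 2) : rnd p q x = .fin y := by
  have := add_two_le_emax hpq
  refine rnd_eq_of_abs_sub_lt (E := E) hy (by omega) (by rwa [zpow_natCast]) ?_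
  rwa [zpow_sub_one₀ two_ne_zero, two_zpow_natCast_sub, ← div_eq_mul_inv]

theorem natCast_eq_mul_two_zpow {L : ℕ} (hL : L ≤ p) (j : ℕ) :
    (j : ℝ) = ((j * 2 ^ (p - L) : ℕ) : ℤ) * 2 ^ ((L : ℤ) - p) := by
  have hA : (2 : ℝ) ^ (p - L) * 2 ^ L = 2 ^ p := by rw [← pow_add, Nat.sub_add_cancel hL]
  rw [two_zpow_natCast_sub]
  push_cast
  linear_combination (-(j : ℝ) * 2 ^ (-(p : ℤ))) * hA - (j : ℝ) * two_pow_mul_two_zpow_neg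

theorem natCast_add_two_zpow_mem_Fset (hpq : (p : ℤ) ≤ 2 ^ (q - 1) - 3) {j L : ℕ}
    (hL₁ : 2 ^ L ≤ j) (hL₂ : j < 2 ^ (L + 1)) (hLp : L ≤ p) :
    (j : ℝ) + 2 ^ ((L : ℤ) - p) ∈ Fset p q := by
  have hA : 2 ^ L * 2 ^ (p - L) = 2 ^ p := by rw [← pow_add, Nat.add_sub_cancel' hLp]
  have hlow := Nat.mul_le_mul_right (2 ^ (p - L)) hL₁
  have hup := Nat.mul_le_mul_right (2 ^ (p - L)) (Nat.succ_le_of_lt hL₂)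
  rw [Nat.succ_mul, pow_succ, mul_right_comm, hA] at hup
  have hP : 1 ≤ 2 ^ (p - L) := Nat.one_le_two_pow
  have hm₁ : 2 ^ p ≤ j * 2 ^ (p - L) + 1 := by omega
  have hm₂ : j * 2 ^ (p - L) + 1 ≤ 2 ^ (p + 1) := by rw [pow_succ]; omega
  refine mem_Fset_of_eq_intCast_mul hpq (m := ((j * 2 ^ (p - L) + 1 : ℕ) : ℤ)) (E := L)
    (by exact_mod_cast hm₁) (by exact_mod_cast hm₂) (by omega) ?_
  rw [natCast_eq_mul_two_zpow hLp j, two_zpow_natCast_sub]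
  push_cast
  ring

theorem succF_natCast (hpq : (p : ℤ) ≤ 2 ^ (q - 1) - 3) {j L : ℕ} (hL₁ : 2 ^ L ≤ j)
    (hL₂ : j < 2 ^ (L + 1)) (hLp : L ≤ p) : succF p q j = j + 2 ^ ((L : ℤ) - p) :=
  succF_eq_add_two_zpow (natCast_eq_mul_two_zpow hLp j) (by rw [zpow_natCast]; exact_mod_cast hL₁)
    (natCast_add_two_zpow_mem_Fset hpq hL₁ hL₂ hLp)

theorem two_zpow_neg_le_quarter (hp : 2 ≤ p) : (2 : ℝ) ^ (-(p : ℤ)) ≤ 1 / 4 := by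
  calc (2 : ℝ) ^ (-(p : ℤ)) ≤ 2 ^ (-2 : ℤ) := zpow_le_zpow_right₀ one_le_two (by omega)
    _ = 1 / 4 := by norm_num

noncomputable def partialSum (p q k : ℕ) : EF :=
  fsuml p q (List.replicate k (.fin (1 + 2 ^ (-(p : ℤ)))))

theorem fsuml_replicate_succ_succ (x : EF) (j : ℕ) :
    fsuml p q (List.replicate (j + 2) x) = fadd p q (fsuml p q (List.replicate (j + 1) x)) x := by
  show (List.replicate (j + 1) x).foldl (fadd p q) x
    = fadd p q ((List.replicate j x).foldl (fadd p q) x) x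
  rw [List.replicate_succ', List.foldl_append]
  rfl

theorem partialSum_succ_of_eq {k : ℕ} (hk : 1 ≤ k) {a : ℝ} (h : partialSum p q k = .fin a) :
    partialSum p q (k + 1) = rnd p q (a + (1 + 2 ^ (-(p : ℤ)))) := by
  obtain ⟨j, rfl⟩ := Nat.exists_eq_add_of_le' hk
  rw [partialSum, fsuml_replicate_succ_succ, ← partialSum, h]
  rfl

theorem partialSum_two (hp : 2 ≤ p) (hpq : (p : ℤ) ≤ 2 ^ (q - 1) - 3) :
    partialSum p q 2 = .fin (2 + 2 ^ ((1 : ℤ) - p)) := by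
  have hu := zpow_pos (two_pos (α := ℝ)) (-(p : ℤ))
  have hmem := natCast_add_two_zpow_mem_Fset hpq (j := 2) (L := 1) le_rfl (by norm_num) (by omega)
  have h1 : (2 : ℝ) ^ ((1 : ℤ) - p) = 2 * 2 ^ (-(p : ℤ)) := by
    simpa using two_zpow_natCast_sub (p := p) 1
  rw [partialSum_succ_of_eq le_rfl rfl]
  refine rnd_eq_of_abs_sub_lt_two_pow hpq (E := 1) (by omega) (by simpa using hmem) ?_ ?_
  · linarith
  · rw [h1, abs_lt]
    constructor <;> linarith

/-- `3 + 3·2^(-p)` is the midpoint of two consecutive floats; ties-to-even rounds it up. -/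
theorem partialSum_three (hp : 2 ≤ p) (hpq : (p : ℤ) ≤ 2 ^ (q - 1) - 3) :
    partialSum p q 3 = .fin (3 + 2 ^ ((2 : ℤ) - p)) := by
  have hu := zpow_pos (two_pos (α := ℝ)) (-(p : ℤ))
  have h1 : (2 : ℝ) ^ ((1 : ℤ) - p) = 2 * 2 ^ (-(p : ℤ)) := by
    simpa using two_zpow_natCast_sub (p := p) 1
  have h2 : (2 : ℝ) ^ ((2 : ℤ) - p) = 4 * 2 ^ (-(p : ℤ)) := by
    exact (two_zpow_natCast_sub 2).trans (by norm_num)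
  have hpow : (2 : ℤ) ^ p = 2 * 2 ^ (p - 1) := by
    rw [← pow_succ', Nat.sub_add_cancel (by omega)]
  have hpow' : (2 : ℤ) ^ (p - 1) = 2 * 2 ^ (p - 2) := by
    rw [← pow_succ']
    congr 1
    omega
  have hge : (2 : ℤ) ≤ 2 ^ (p - 1) := by
    rw [hpow']
    linarith [one_le_pow₀ (M₀ := ℤ) (n := p - 2) one_le_two]
  have hy : (3 : ℝ) + 2 ^ ((2 : ℤ) - p)
      = ((3 * 2 ^ (p - 1) + 2 : ℤ) : ℝ) * 2 ^ ((1 : ℤ) - p) := by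
    have hpowR : (2 : ℝ) ^ p = 2 * 2 ^ (p - 1) := by exact_mod_cast hpow
    have hq : (2 : ℝ) ^ (p - 1) * (2 * 2 ^ (-(p : ℤ))) = 1 := by
      have := two_pow_mul_two_zpow_neg (p := p)
      rw [hpowR] at this
      linear_combination this
    rw [h1, h2]
    push_cast
    linear_combination (-3 : ℝ) * hq
  rw [partialSum_succ_of_eq (by norm_num) (partialSum_two hp hpq), hy]
  have := emin_nonpos hpq
  have := add_two_le_emax hpq
  refine rnd_eq_of_abs_sub_eq (E := 1) (evenMantissa_intCast_mul_two_zpow (by omega) (by omega)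
    (by rw [pow_succ]; omega) (by omega) (by omega) (by omega)) (by omega) ?_ ?_
  · rw [zpow_one]
    linarith
  · rw [← hy, h1, h2, sub_sub_cancel_left, abs_sub_comm, abs_of_pos (by linarith)]
    ring

theorem partialSum_four (hp : 2 ≤ p) (hpq : (p : ℤ) ≤ 2 ^ (q - 1) - 3) :
    partialSum p q 4 = .fin (4 + 2 ^ ((2 : ℤ) - p)) := by
  have hu := zpow_pos (two_pos (α := ℝ)) (-(p : ℤ))
  have h2 : (2 : ℝ) ^ ((2 : ℤ) - p) = 4 * 2 ^ (-(p : ℤ)) := by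
    exact (two_zpow_natCast_sub 2).trans (by norm_num)
  have hmem := natCast_add_two_zpow_mem_Fset hpq (j := 4) (L := 2) le_rfl (by norm_num) hp
  rw [partialSum_succ_of_eq (by norm_num) (partialSum_three hp hpq)]
  refine rnd_eq_of_abs_sub_lt_two_pow hpq (E := 2) (by omega) (by simpa using hmem) ?_ ?_
  · linarith
  · rw [h2, abs_lt]
    constructor <;> linarith

/-- The exact sum lies `2^(-p)` above the target, or, when `k + 1` is a power of two and the ulp
doubles, `ulp(k) - 2^(-p)` below it: in both cases within half an ulp. -/
theorem rnd_natCast_add_ulp (hpq : (p : ℤ) ≤ 2 ^ (q - 1) - 3) {k : ℕ} (h₁ : 4 ≤ k)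
    (h₂ : k + 1 ≤ 2 ^ p) :
    rnd p q ((k + 2 ^ ((Nat.log 2 k : ℤ) - p)) + (1 + 2 ^ (-(p : ℤ))))
      = .fin (((k + 1 : ℕ) : ℝ) + 2 ^ ((Nat.log 2 (k + 1) : ℤ) - p)) := by
  set L := Nat.log 2 k
  have hL₁ : 2 ^ L ≤ k := Nat.pow_log_le_self 2 (by omega)
  have hL₂ : k + 1 ≤ 2 ^ (L + 1) := Nat.lt_pow_succ_log_self one_lt_two k
  have hL : 2 ≤ L := Nat.le_log_of_pow_le one_lt_two h₁
  have hLp : L < p := (Nat.pow_lt_pow_iff_right one_lt_two).1 (by omega)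
  have hu := zpow_pos (two_pos (α := ℝ)) (-(p : ℤ))
  have hA : (4 : ℝ) ≤ 2 ^ L := by exact_mod_cast Nat.pow_le_pow_right two_pos hL
  have hAu := mul_le_mul_of_nonneg_right hA hu.le
  have hk : (2 : ℝ) ^ L ≤ k := by exact_mod_cast hL₁
  rcases hL₂.lt_or_eq with hlt | heq
  · rw [Nat.log_eq_of_pow_le_of_lt_pow (by omega) hlt]
    refine rnd_eq_of_abs_sub_lt_two_pow hpq (E := L) (by omega)
      (natCast_add_two_zpow_mem_Fset hpq (by omega) hlt hLp.le) ?_ ?_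
    · rw [two_zpow_natCast_sub]
      nlinarith
    · rw [two_zpow_natCast_sub]
      push_cast
      rw [abs_lt]
      constructor <;> linarith
  · have hkR : (k : ℝ) + 1 = 2 * 2 ^ L := by rw [← pow_succ']; exact_mod_cast heq
    rw [heq, Nat.log_pow one_lt_two]
    refine rnd_eq_of_abs_sub_lt_two_pow hpq (E := L + 1) (by omega)
      (natCast_add_two_zpow_mem_Fset hpq le_rfl (Nat.pow_lt_pow_right one_lt_two (by omega)) hLp)
      ?_ ?_
    · rw [two_zpow_natCast_sub, pow_succ]
      nlinarith
    · push_cast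
      rw [two_zpow_natCast_sub, ← Nat.cast_succ, two_zpow_natCast_sub, pow_succ, abs_lt]
      constructor <;> linarith

theorem partialSum_of_le_two_pow (hp : 2 ≤ p) (hpq : (p : ℤ) ≤ 2 ^ (q - 1) - 3) {k : ℕ}
    (h₁ : 4 ≤ k) (h₂ : k ≤ 2 ^ p) :
    partialSum p q k = .fin (k + 2 ^ ((Nat.log 2 k : ℤ) - p)) := by
  induction k, h₁ using Nat.le_induction with
  | base => rw [partialSum_four hp hpq, show Nat.log 2 4 = 2 from Nat.log_pow one_lt_two 2]; rfl
  | succ k hk ih =>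
    rw [partialSum_succ_of_eq (by omega) (ih (by omega)), rnd_natCast_add_ulp hpq hk h₂]

theorem partialSum_of_two_pow_le (hp : 2 ≤ p) (hpq : (p : ℤ) ≤ 2 ^ (q - 1) - 3) {k : ℕ}
    (h₁ : 2 ^ p ≤ k) (h₂ : k ≤ 2 ^ (p + 1) - 1) : partialSum p q k = .fin (k + 1) := by
  have h4 : 4 ≤ 2 ^ p := Nat.pow_le_pow_right two_pos hp
  have hu := zpow_pos (two_pos (α := ℝ)) (-(p : ℤ))
  have hu4 := two_zpow_neg_le_quarter hp
  induction k, h₁ using Nat.le_induction with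
  | base =>
    rw [partialSum_of_le_two_pow hp hpq h4 le_rfl, Nat.log_pow one_lt_two, sub_self, zpow_zero]
  | succ k hk ih =>
    rw [partialSum_succ_of_eq (by omega) (ih (by omega))]
    have hkR : (2 : ℝ) ^ p ≤ k := by exact_mod_cast hk
    have hm₂ : k + 2 ≤ 2 ^ (p + 1) := by omega
    refine rnd_eq_of_abs_sub_lt_two_pow hpq (E := p) (by omega)
      (mem_Fset_of_eq_intCast_mul hpq (m := k + 2) (E := p)
        (by exact_mod_cast (by omega : 2 ^ p ≤ k + 2)) (by exact_mod_cast hm₂) (by omega) ?_)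
      (by linarith) ?_
    · push_cast
      linear_combination (-((k : ℝ) + 2)) * two_pow_mul_two_zpow_neg (p := p)
    · rw [two_pow_mul_two_zpow_neg]
      push_cast
      rw [abs_lt]
      constructor <;> linarith

theorem partialSum_of_two_pow_succ_sub_one_le (hp : 2 ≤ p) (hpq : (p : ℤ) ≤ 2 ^ (q - 1) - 3)
    {k : ℕ} (h₁ : 2 ^ (p + 1) - 1 ≤ k) (h₂ : k ≤ 3 * 2 ^ p - 1) :
    partialSum p q k = .fin (2 ^ (p + 1) + 2 * ((k : ℝ) - 2 ^ (p + 1) + 1)) := by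
  have h4 : 4 ≤ 2 ^ p := Nat.pow_le_pow_right two_pos hp
  have hpow : 2 ^ (p + 1) = 2 * 2 ^ p := pow_succ' 2 p
  have hu := zpow_pos (two_pos (α := ℝ)) (-(p : ℤ))
  have hu4 := two_zpow_neg_le_quarter hp
  induction k, h₁ using Nat.le_induction with
  | base =>
    rw [partialSum_of_two_pow_le hp hpq (by omega) le_rfl, Nat.cast_sub Nat.one_le_two_pow]
    push_cast
    congr 1
    ring
  | succ k hk ih =>
    rw [partialSum_succ_of_eq (by omega) (ih (by omega))]
    have hkR : (2 : ℝ) ^ (p + 1) - 1 ≤ k := by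
      have : ((2 ^ (p + 1) - 1 : ℕ) : ℝ) ≤ k := by exact_mod_cast hk
      rwa [Nat.cast_sub Nat.one_le_two_pow, Nat.cast_pow, Nat.cast_ofNat, Nat.cast_one] at this
    have hm₁ : 2 ^ p ≤ k + 2 - 2 ^ p := by omega
    have hm₂ : k + 2 - 2 ^ p ≤ 2 ^ (p + 1) := by omega
    refine rnd_eq_of_abs_sub_lt_two_pow hpq (E := p + 1) (by omega)
      (mem_Fset_of_eq_intCast_mul hpq (m := ((k + 2 - 2 ^ p : ℕ) : ℤ)) (E := p + 1)
        (by exact_mod_cast hm₁) (by exact_mod_cast hm₂) le_rfl ?_) (by linarith) ?_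
    · push_cast [Nat.cast_sub (by omega : 2 ^ p ≤ k + 2)]
      linear_combination (-2 * ((k : ℝ) + 2 - 2 ^ p)) * two_pow_mul_two_zpow_neg (p := p)
    · rw [pow_succ, mul_right_comm, two_pow_mul_two_zpow_neg]
      push_cast
      rw [abs_lt]
      constructor <;> linarith

theorem partialSum_three_mul_two_pow_sub_one_add (hp : 2 ≤ p)
    (hpq : (p : ℤ) ≤ 2 ^ (q - 1) - 3) (n : ℕ) :
    partialSum p q (3 * 2 ^ p - 1 + n) = .fin (2 ^ (p + 2)) := by
  have h4 : 4 ≤ 2 ^ p := Nat.pow_le_pow_right two_pos hp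
  have hu := zpow_pos (two_pos (α := ℝ)) (-(p : ℤ))
  have hu4 := two_zpow_neg_le_quarter hp
  induction n with
  | zero =>
    rw [Nat.add_zero,
      partialSum_of_two_pow_succ_sub_one_le hp hpq (by rw [pow_succ]; omega) le_rfl,
      Nat.cast_sub (by omega)]
    push_cast
    congr 1
    ring
  | succ n ih =>
    rw [← add_assoc, partialSum_succ_of_eq (by omega) ih]
    refine rnd_eq_of_abs_sub_lt_two_pow hpq (E := p + 2) le_rfl
      (mem_Fset_of_eq_intCast_mul hpq (m := 2 ^ (p + 1)) (E := p + 1)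
        (by rw [pow_succ]; linarith [pow_pos (two_pos (α := ℤ)) p]) le_rfl le_rfl ?_)
      (by linarith) ?_
    · push_cast
      linear_combination (-4 * (2 : ℝ) ^ p) * two_pow_mul_two_zpow_neg (p := p)
    · rw [pow_add, mul_right_comm, two_pow_mul_two_zpow_neg, abs_lt]
      constructor <;> linarith

theorem ne_of_forall_fin_lt_succ {s : ℕ → EF} {N : ℕ}
    (h : ∀ k < N, ∃ a b : ℝ, s k = .fin a ∧ s (k + 1) = .fin b ∧ a < b) {k l : ℕ}
    (hk : k ≤ N) (hl : l ≤ N) (hkl : k ≠ l) : s k ≠ s l := by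
  have key : ∀ k l, k < l → l ≤ N →
      ∃ a b : ℝ, s k = .fin a ∧ s l = .fin b ∧ a < b := by
    intro k l hkl hl
    induction l, hkl using Nat.le_induction with
    | base => exact h k (by omega)
    | succ l hkl ih =>
      obtain ⟨a, b, ha, hb, hab⟩ := ih (by omega)
      obtain ⟨b', c, hb', hc, hbc⟩ := h l (by omega)
      rw [hb, EF.fin.injEq] at hb'
      exact ⟨a, c, ha, hc, hab.trans (hb' ▸ hbc)⟩
  rcases hkl.lt_or_gt with hlt | hgt
  · obtain ⟨a, b, ha, hb, hab⟩ := key k l hlt hl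
    rw [ha, hb]
    exact fun he => hab.ne (EF.fin.inj he)
  · obtain ⟨a, b, ha, hb, hab⟩ := key l k hgt hk
    rw [ha, hb]
    exact fun he => hab.ne' (EF.fin.inj he)

theorem partialSum_lt_succ (hp : 2 ≤ p) (hpq : (p : ℤ) ≤ 2 ^ (q - 1) - 3) :
    ∀ k < 3 * 2 ^ p - 1, ∃ a b : ℝ,
      partialSum p q k = .fin a ∧ partialSum p q (k + 1) = .fin b ∧ a < b := by
  have h4 : 4 ≤ 2 ^ p := Nat.pow_le_pow_right two_pos hp
  have hpow : 2 ^ (p + 1) = 2 * 2 ^ p := pow_succ' 2 p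
  have hzpow {a b : ℤ} (h : a < b) : (2 : ℝ) ^ a < 2 ^ b := zpow_lt_zpow_right₀ one_lt_two h
  intro k hk
  obtain hk4 | hk4 := lt_or_ge k 4
  · interval_cases k
    · exact ⟨_, _, rfl, rfl, by positivity⟩
    · exact ⟨_, _, rfl, partialSum_two hp hpq,
        by linarith [hzpow (show -(p : ℤ) < 1 - p by omega)]⟩
    · exact ⟨_, _, partialSum_two hp hpq, partialSum_three hp hpq,
        by linarith [hzpow (show (1 - p : ℤ) < 2 - p by omega)]⟩
    · exact ⟨_, _, partialSum_three hp hpq, partialSum_four hp hpq, by linarith⟩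
  obtain hkA | hkA := lt_or_ge k (2 ^ p)
  · refine ⟨_, _, partialSum_of_le_two_pow hp hpq hk4 hkA.le,
      partialSum_of_le_two_pow hp hpq (by omega) hkA, ?_⟩
    have hL : Nat.log 2 k ≤ p := (Nat.log_mono_right hkA.le).trans (Nat.log_pow one_lt_two p).le
    push_cast
    linarith [zpow_le_one_of_nonpos₀ (one_le_two (α := ℝ))
        (show (Nat.log 2 k : ℤ) - p ≤ 0 by omega),
      zpow_pos (two_pos (α := ℝ)) ((Nat.log 2 (k + 1) : ℤ) - p)]
  obtain hkB | hkB := lt_or_ge k (2 ^ (p + 1) - 1)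
  · exact ⟨_, _, partialSum_of_two_pow_le hp hpq hkA hkB.le,
      partialSum_of_two_pow_le hp hpq (by omega) hkB, by push_cast; linarith⟩
  · exact ⟨_, _, partialSum_of_two_pow_succ_sub_one_le hp hpq hkB hk.le,
      partialSum_of_two_pow_succ_sub_one_le hp hpq (by omega) hk, by push_cast; linarith⟩

end PartialSums

end FPT

/-- Lemma `max-distinguish`. The left-associative partial sums
`s_k = ⊕_{i=1}^k 1⁺` are pairwise distinct for `k ≤ 3·2^p − 1`, saturate at `2^(p+2)`
afterwards, and have the given explicit values. -/
theorem stmt9 (p q : ℕ) (hp : 2 ≤ p) (hpq : (p : ℤ) ≤ 2 ^ (q - 1) - 3) :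
    let op : ℝ := 1 + 2 ^ (-(p : ℤ))
    let s : ℕ → FPT.EF := fun k => FPT.fsuml p q (List.replicate k (.fin op))
    (∀ k l : ℕ, k ≤ 3 * 2 ^ p - 1 → l ≤ 3 * 2 ^ p - 1 → k ≠ l → s k ≠ s l) ∧
    (∀ n : ℕ, s (3 * 2 ^ p - 1 + n) = .fin ((2 : ℝ) ^ (p + 2))) ∧
    s 0 = .fin 0 ∧
    s 1 = .fin op ∧
    s 2 = .fin (2 + 2 ^ ((1 : ℤ) - p)) ∧
    s 3 = .fin (3 + 2 ^ ((2 : ℤ) - p)) ∧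
    (∀ k : ℕ, 4 ≤ k → k ≤ 2 ^ p → s k = .fin (FPT.succF p q (k : ℝ))) ∧
    (∀ k : ℕ, 2 ^ p + 1 ≤ k → k ≤ 2 ^ (p + 1) - 1 → s k = .fin ((k : ℝ) + 1)) ∧
    (∀ k : ℕ, 2 ^ (p + 1) ≤ k → k ≤ 3 * 2 ^ p - 1 →
      s k = .fin ((2 : ℝ) ^ (p + 1) + 2 * ((k : ℝ) - 2 ^ (p + 1) + 1))) := by
  intro op s
  refine ⟨fun k l hk hl hkl => FPT.ne_of_forall_fin_lt_succ (s := FPT.partialSum p q)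
      (FPT.partialSum_lt_succ hp hpq) hk hl hkl,
    FPT.partialSum_three_mul_two_pow_sub_one_add hp hpq, rfl, rfl, FPT.partialSum_two hp hpq,
    FPT.partialSum_three hp hpq, fun k h₁ h₂ => ?_,
    fun k h₁ h₂ => FPT.partialSum_of_two_pow_le hp hpq (by omega) h₂,
    fun k h₁ h₂ => FPT.partialSum_of_two_pow_succ_sub_one_le hp hpq (by omega) h₂⟩
  have hL : Nat.log 2 k ≤ p := (Nat.log_mono_right h₂).trans (Nat.log_pow one_lt_two p).le
  rw [FPT.succF_natCast hpq (Nat.pow_log_le_self 2 (by omega))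
    (Nat.lt_pow_succ_log_self one_lt_two k) hL]
  exact FPT.partialSum_of_le_two_pow hp hpq h₁ h₂
end

section
/- Suppose p ≥ 3. Then in floating-point arithmetic, (1^+ ⊕ 1^{++}) ⊕ 1^{++} = (1^{++} ⊕ 1^+) ⊕ 1^{++} = 3^{+++}, while (1^{++} ⊕ 1^{++}) ⊕ 1^+ = 3^{++}. Here 1^+ = 1 + 2^{−p}, 1^{++} = 1 + 2^{1−p}, 3^{++} = 3 + 2^{2−p}, and 3^{+++} = 3 + 3·2^{1−p}. -/
open scoped Classical

namespace FPTAux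
open FPT

lemma t_pos (e : ℤ) : (0:ℝ) < 2 ^ e := zpow_pos (by norm_num) e

lemma two_ne : (2:ℝ) ≠ 0 := by norm_num

lemma zpow_mul_zpow (a b : ℤ) : (2:ℝ) ^ a * 2 ^ b = 2 ^ (a + b) :=
  (zpow_add₀ two_ne a b).symm

variable {p q : ℕ}

lemma emin_le_one (hp : 3 ≤ p) (hpq : (p:ℤ) ≤ 2 ^ (q - 1) - 3) : emin q ≤ 1 := by
  have : (3:ℤ) ≤ (p:ℤ) := by exact_mod_cast hp
  unfold emin; omega

lemma one_le_emax (hp : 3 ≤ p) (hpq : (p:ℤ) ≤ 2 ^ (q - 1) - 3) : 1 ≤ emax q := by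
  have : (3:ℤ) ≤ (p:ℤ) := by exact_mod_cast hp
  unfold emax; omega

lemma thr_ge (hp : 3 ≤ p) (hpq : (p:ℤ) ≤ 2 ^ (q - 1) - 3) : (8:ℝ) ≤ thr p q := by
  have h3 : (3:ℤ) ≤ emax q := by
    have : (3:ℤ) ≤ (p:ℤ) := by exact_mod_cast hp
    unfold emax; omega
  have h1 : (2:ℝ) ^ (3:ℤ) ≤ (2:ℝ) ^ (emax q) := zpow_le_zpow_right₀ (by norm_num) h3
  have h2 : (2:ℝ) ^ (-(p:ℤ)) ≤ 1 := by
    apply zpow_le_one_of_nonpos₀ (by norm_num)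
    simp
  have h4 : (0:ℝ) < 2 ^ (emax q - (p:ℤ) - 1) := t_pos _
  have h5 : (8:ℝ) = (2:ℝ)^(3:ℤ) := by norm_num
  unfold thr Omega
  nlinarith [t_pos (emax q)]

/-- Membership helper: `m·2^(1-p) ∈ 𝔽` for `2^p ≤ m ≤ 2^(p+1)-1`. -/
lemma mem_Fset (hp : 3 ≤ p) (hpq : (p:ℤ) ≤ 2 ^ (q - 1) - 3) (m : ℤ)
    (h1 : 2 ^ p ≤ m) (h2 : m ≤ 2 ^ (p + 1) - 1) :
    (m:ℝ) * (2:ℝ) ^ ((1:ℤ) - (p:ℤ)) ∈ Fset p q := by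
  have hm0 : 0 ≤ m := le_trans (by positivity) h1
  refine ⟨m, 1, ?_, emin_le_one hp hpq, one_le_emax hp hpq, ?_, rfl⟩
  · rwa [abs_of_nonneg hm0]
  · left; rwa [abs_of_nonneg hm0]

lemma cast_nat_pow (n : ℕ) : ((2 ^ n : ℤ) : ℝ) = (2:ℝ) ^ (n:ℤ) := by
  push_cast
  exact (zpow_natCast 2 n).symm

/-- Any float `z > 2` is an integer multiple of `2^(1-p)`. -/
lemma mult_of_gt_two (z : ℝ) (hz : z ∈ Fset p q) (h2 : 2 < z) :
    ∃ k : ℤ, z = (k:ℝ) * (2:ℝ) ^ ((1:ℤ) - (p:ℤ)) := by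
  obtain ⟨m, e, hm, _, _, _, rfl⟩ := hz
  rcases le_or_gt 1 e with he | he
  · refine ⟨m * 2 ^ (e - 1).toNat, ?_⟩
    push_cast
    rw [← zpow_natCast (2:ℝ) (e-1).toNat, Int.toNat_of_nonneg (by omega), mul_assoc,
      zpow_mul_zpow]
    ring_nf
  · exfalso
    have hmle : (m:ℝ) ≤ ((2:ℤ)^(p+1) - 1 : ℤ) := by
      exact_mod_cast le_trans (le_abs_self m) hm
    have hle : (m:ℝ) * (2:ℝ) ^ (e - (p:ℤ)) ≤ ((2:ℤ)^(p+1) - 1 : ℤ) * (2:ℝ) ^ (-(p:ℤ)) := by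
      have hz1 : (2:ℝ) ^ (e - (p:ℤ)) ≤ (2:ℝ) ^ (-(p:ℤ)) :=
        zpow_le_zpow_right₀ (by norm_num) (by omega)
      have hmpos : (0:ℝ) ≤ (m:ℝ) ∨ (m:ℝ) < 0 := le_or_gt 0 _
      rcases hmpos with h | h
      · refine mul_le_mul hmle hz1 (le_of_lt (t_pos _)) ?_
        have h0 : (1:ℤ) ≤ 2 ^ (p+1) := one_le_pow₀ (by norm_num)
        exact_mod_cast (by omega : (0:ℤ) ≤ 2 ^ (p+1) - 1)
      · nlinarith [t_pos (e - (p:ℤ)), t_pos (-(p:ℤ)), hmle]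
    have hval : ((2:ℤ)^(p+1) - 1 : ℤ) * (2:ℝ) ^ (-(p:ℤ)) < 2 := by
      push_cast
      rw [← zpow_natCast (2:ℝ) (p+1)]
      have : ((p+1 : ℕ) : ℤ) = (p:ℤ) + 1 := by push_cast; ring
      rw [this, sub_mul, zpow_mul_zpow]
      have h1 : (2:ℝ) ^ ((p:ℤ) + 1 + -(p:ℤ)) = 2 := by norm_num
      nlinarith [t_pos (-(p:ℤ))]
    linarith

/-- No odd multiple `K·2^(1-p)` with `2^p ≤ K` has an even-mantissa representation. -/
lemma not_evenM (hp : 3 ≤ p) (K : ℤ) (hodd : ¬ 2 ∣ K) (hK : 2 ^ p ≤ K) :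
    ¬ EvenMantissa p q ((K:ℝ) * (2:ℝ) ^ ((1:ℤ) - (p:ℤ))) := by
  rintro ⟨m, e, hm, _, _, _, heq, hme⟩
  have key : (m:ℝ) * (2:ℝ) ^ e = (K:ℝ) * 2 := by
    have h := congrArg (· * (2:ℝ) ^ (p:ℤ)) heq
    simp only [mul_assoc, zpow_mul_zpow] at h
    have e1 : e - (p:ℤ) + (p:ℤ) = e := by ring
    have e2 : (1:ℤ) - (p:ℤ) + (p:ℤ) = 1 := by ring
    rw [e1, e2, zpow_one] at h
    linarith [h]  -- h : K * 2 = m * 2 ^ e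
  rcases le_or_gt 1 e with he | he
  · -- m * 2^(e-1) = K, m even ⇒ K even
    have h2 : (m:ℝ) * (2:ℝ) ^ (e - 1) = (K:ℝ) := by
      have := congrArg (· * (2:ℝ) ^ (-1:ℤ)) key
      simp only [mul_assoc, zpow_mul_zpow] at this
      rw [show e + -1 = e - 1 by ring] at this
      norm_num at this
      linarith [this]
    have h3 : ((m * 2 ^ (e-1).toNat : ℤ) : ℝ) = (K:ℝ) := by
      push_cast
      rw [← zpow_natCast (2:ℝ) (e-1).toNat, Int.toNat_of_nonneg (by omega)]
      exact h2
    have h4 : m * 2 ^ (e-1).toNat = K := by exact_mod_cast h3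
    exact hodd (h4 ▸ hme.mul_right _)
  · -- m = 2K·2^(-e), huge
    have h2 : (m:ℝ) = (K:ℝ) * 2 * (2:ℝ) ^ (-e) := by
      have h := congrArg (· * (2:ℝ) ^ (-e)) key
      simp only [mul_assoc, zpow_mul_zpow, add_neg_cancel, zpow_zero, mul_one] at h
      linear_combination h
    have h3 : ((K * 2 * 2 ^ (-e).toNat : ℤ) : ℝ) = (m:ℝ) := by
      push_cast
      rw [← zpow_natCast (2:ℝ) (-e).toNat, Int.toNat_of_nonneg (by omega)]
      linarith [h2]
    have h4 : K * 2 * 2 ^ (-e).toNat = m := by exact_mod_cast h3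
    have h5 : (1:ℤ) ≤ 2 ^ (-e).toNat := one_le_pow₀ (by norm_num)
    have h6 : m ≤ 2 ^ (p+1) - 1 := le_trans (le_abs_self m) hm
    have h7 : (2:ℤ)^(p+1) = 2^p * 2 := pow_succ 2 p
    have h8 : (2:ℤ)^p * 1 ≤ K * 2 ^ (-e).toNat :=
      mul_le_mul hK h5 (by norm_num) (le_trans (by positivity) hK)
    have h9 : K * 2 * 2 ^ (-e).toNat = 2 * (K * 2 ^ (-e).toNat) := by ring
    omega

/-- rounding characterization via existence + uniqueness. -/
lemma rnd_eq_of (x y : ℝ) (hb : |x| < thr p q) (hex : RoundsTo p q x y)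
    (huni : ∀ y', RoundsTo p q x y' → y' = y) : rnd p q x = .fin y := by
  obtain ⟨hb1, hb2⟩ := abs_lt.1 hb
  have h1 : ¬ thr p q ≤ x := by linarith
  have h2 : ¬ x ≤ -thr p q := by linarith
  simp only [rnd, h1, h2, if_false]
  exact congrArg EF.fin (huni _ (Classical.epsilon_spec (p := RoundsTo p q x) ⟨y, hex⟩))

/-- exact rounding of a float. -/
lemma rnd_exact (x : ℝ) (hx : x ∈ Fset p q) (hb : |x| < thr p q) :
    rnd p q x = .fin x := by
  refine rnd_eq_of x x hb ⟨hx, fun z _ => by simp, Or.inl fun z _ hz => ?_⟩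
    fun y' hy' => ?_
  · have : |x - z| = 0 := by simpa using hz
    have := abs_eq_zero.1 this; linarith
  · have h := hy'.2.1 x hx
    simp only [sub_self, abs_zero] at h
    have : |x - y'| = 0 := le_antisymm h (abs_nonneg _)
    have := abs_eq_zero.1 this; linarith

/-- Tie rounding: `x = (2N+s)·2^(-p)` with `s = ±1` rounds to the even neighbor `N·2^(1-p)`. -/
lemma tie (hp : 3 ≤ p) (hpq : (p:ℤ) ≤ 2 ^ (q - 1) - 3) (N s : ℤ)
    (hs : s = 1 ∨ s = -1) (hNe : 2 ∣ N) (hN1 : 2 ^ p + 1 ≤ N) (hN2 : N + 1 ≤ 2 ^ (p+1) - 1) :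
    rnd p q (((2*N + s : ℤ):ℝ) * (2:ℝ) ^ (-(p:ℤ))) = .fin ((N:ℝ) * (2:ℝ) ^ ((1:ℤ) - (p:ℤ))) := by
  set t : ℝ := (2:ℝ) ^ (-(p:ℤ)) with hts
  have ht : 0 < t := t_pos _
  have hu : (2:ℝ) ^ ((1:ℤ) - (p:ℤ)) = 2 * t := by
    rw [hts, sub_eq_add_neg, ← zpow_mul_zpow, zpow_one]
  set x : ℝ := ((2*N + s : ℤ):ℝ) * t with hxs
  set y : ℝ := (N:ℝ) * (2:ℝ) ^ ((1:ℤ) - (p:ℤ)) with hys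
  have hyx : y = ((2*N : ℤ):ℝ) * t := by rw [hys, hu]; push_cast; ring
  have hdist : ∀ a b : ℤ, |((a:ℤ):ℝ)*t - ((b:ℤ):ℝ)*t| = |((a - b : ℤ):ℝ)| * t := by
    intro a b
    rw [← sub_mul, abs_mul, abs_of_pos ht]
    push_cast
    ring_nf
  have h7 : (2:ℤ) ^ (p+1) = 2 ^ p * 2 := pow_succ 2 p
  have hppos : (0:ℤ) < 2 ^ p := by positivity
  have hpeven : (2:ℤ) ∣ 2 ^ p := dvd_pow_self 2 (by omega)
  have hN1' : 2 ^ p + 2 ≤ N := by omega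
  have hpow1 : ((2 ^ (p+1) : ℤ):ℝ) * t = 2 := by
    rw [cast_nat_pow, hts, zpow_mul_zpow]
    have : ((p+1 : ℕ):ℤ) + -(p:ℤ) = 1 := by push_cast; ring
    rw [this, zpow_one]
  have hxlb : 2 + 3 * t ≤ x := by
    have hmono : ((2 ^ (p+1) + 3 : ℤ):ℝ) ≤ ((2*N + s : ℤ):ℝ) := by
      have : (2 ^ (p+1) + 3 : ℤ) ≤ 2*N + s := by rcases hs with h | h <;> omega
      exact_mod_cast this
    have h1 : ((2 ^ (p+1) + 3 : ℤ):ℝ) * t ≤ x := mul_le_mul_of_nonneg_right hmono ht.le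
    have h2 : ((2 ^ (p+1) + 3 : ℤ):ℝ) * t = 2 + 3 * t := by
      have h := hpow1
      push_cast at h ⊢
      linear_combination h
    linarith
  have hymem : y ∈ Fset p q := mem_Fset hp hpq N (by omega) (by omega)
  have hxy : |x - y| = t := by
    rw [hyx, hxs, hdist]
    have : (2*N + s - 2*N : ℤ) = s := by ring
    rw [this]
    rcases hs with h | h <;> rw [h] <;> norm_num
  have hmin : ∀ z ∈ Fset p q, t ≤ |x - z| := by
    intro z hz
    rcases le_or_gt z 2 with hz2 | hz2
    · have : x - z ≥ 3 * t := by linarith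
      have habs : x - z ≤ |x - z| := le_abs_self _
      linarith
    · obtain ⟨k, hk⟩ := mult_of_gt_two z hz hz2
      have hzk : z = ((2*k : ℤ):ℝ) * t := by rw [hk, hu]; push_cast; ring
      rw [hzk, hxs, hdist]
      have hne : (1:ℤ) ≤ |2*N + s - 2*k| :=
        Int.one_le_abs (by rcases hs with h | h <;> omega)
      have hne' : (1:ℝ) ≤ |((2*N + s - 2*k : ℤ):ℝ)| := by exact_mod_cast hne
      nlinarith
  have hRT : RoundsTo p q x y := by
    refine ⟨hymem, fun z hz => by rw [hxy]; exact hmin z hz, Or.inr ?_⟩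
    have hN0 : 0 ≤ N := by omega
    refine ⟨N, 1, ?_, emin_le_one hp hpq, one_le_emax hp hpq, Or.inl ?_, rfl, hNe⟩
    · rw [abs_of_nonneg hN0]; omega
    · rw [abs_of_nonneg hN0]; omega
  refine rnd_eq_of x y ?_ hRT ?_
  · -- |x| < thr
    have hxpos : 0 < x := by linarith
    have hxle : x ≤ 4 := by
      have hmono : ((2*N + s : ℤ):ℝ) ≤ ((2 * 2 ^ (p+1) : ℤ):ℝ) := by
        have : (2*N + s : ℤ) ≤ 2 * 2 ^ (p+1) := by rcases hs with h | h <;> omega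
        exact_mod_cast this
      have h1 : x ≤ ((2 * 2 ^ (p+1) : ℤ):ℝ) * t := mul_le_mul_of_nonneg_right hmono ht.le
      have h2 : ((2 * 2 ^ (p+1) : ℤ):ℝ) * t = 4 := by
        have h := hpow1
        push_cast at h ⊢
        linear_combination 2 * h
      linarith
    rw [abs_of_pos hxpos]
    have := thr_ge (q := q) hp hpq
    linarith
  · intro y' hy'
    have hle : |x - y'| ≤ t := hxy ▸ hy'.2.1 y hymem
    have hge : t ≤ |x - y'| := hmin y' hy'.1
    have heqd : |x - y'| = t := le_antisymm hle hge
    have hy2 : 2 < y' := by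
      by_contra h
      push_neg at h
      have : x - y' ≥ 3 * t := by linarith
      have habs : x - y' ≤ |x - y'| := le_abs_self _
      linarith
    obtain ⟨k, hk⟩ := mult_of_gt_two y' hy'.1 hy2
    have hy'k : y' = ((2*k : ℤ):ℝ) * t := by rw [hk, hu]; push_cast; ring
    have habs1 : |2*N + s - 2*k| = 1 := by
      have h1 : |((2*N + s - 2*k : ℤ):ℝ)| * t = t := by
        rw [← hdist]
        rw [← hy'k, ← hxs]
        exact heqd
      have h2 : |((2*N + s - 2*k : ℤ):ℝ)| = 1 :=
        mul_right_cancel₀ ht.ne' (by rw [h1, one_mul])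
      exact_mod_cast h2
    have hkN : k = N ∨ k = N + s := by
      have h2 := (abs_eq (by norm_num : (0:ℤ) ≤ 1)).mp habs1
      rcases hs with h | h <;> omega
    rcases hy'.2.2 with huniq | hEM
    · exact (huniq y hymem (hxy.trans heqd.symm)).symm
    · rcases hkN with rfl | rfl
      · rw [hy'k, hyx]
      · exfalso
        refine not_evenM (q := q) hp (N + s) ?_ ?_ ?_
        · rcases hs with h | h <;> omega
        · omega
        · rwa [← hk]

end FPTAux

open FPTAux

/-- Lemma `oneppp`. For `p ≥ 3`:
`(1⁺ ⊕ 1⁺⁺) ⊕ 1⁺⁺ = (1⁺⁺ ⊕ 1⁺) ⊕ 1⁺⁺ = 3⁺⁺⁺` while `(1⁺⁺ ⊕ 1⁺⁺) ⊕ 1⁺ = 3⁺⁺`. -/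
theorem stmt14 (p q : ℕ) (hp : 3 ≤ p) (hpq : (p : ℤ) ≤ 2 ^ (q - 1) - 3) :
    FPT.fadd p q (FPT.fadd p q (.fin (1 + 2 ^ (-(p : ℤ)))) (.fin (1 + 2 ^ ((1 : ℤ) - p))))
        (.fin (1 + 2 ^ ((1 : ℤ) - p))) = .fin (3 + 3 * 2 ^ ((1 : ℤ) - p)) ∧
    FPT.fadd p q (FPT.fadd p q (.fin (1 + 2 ^ ((1 : ℤ) - p))) (.fin (1 + 2 ^ (-(p : ℤ)))))
        (.fin (1 + 2 ^ ((1 : ℤ) - p))) = .fin (3 + 3 * 2 ^ ((1 : ℤ) - p)) ∧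
    FPT.fadd p q (FPT.fadd p q (.fin (1 + 2 ^ ((1 : ℤ) - p))) (.fin (1 + 2 ^ ((1 : ℤ) - p))))
        (.fin (1 + 2 ^ (-(p : ℤ)))) = .fin (3 + 2 ^ ((2 : ℤ) - p)) := by
  have hthr := thr_ge (q := q) hp hpq
  set t : ℝ := (2:ℝ) ^ (-(p:ℤ)) with hts
  have ht : 0 < t := t_pos _
  have ht8 : t ≤ 1/8 := by
    have h1 : (2:ℝ) ^ (-(p:ℤ)) ≤ (2:ℝ) ^ (-3:ℤ) := by
      apply zpow_le_zpow_right₀ (by norm_num)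
      omega
    rw [hts]
    norm_num at h1 ⊢
    linarith
  have hu : (2:ℝ) ^ ((1:ℤ) - (p:ℤ)) = 2 * t := by
    rw [hts, sub_eq_add_neg, ← zpow_mul_zpow, zpow_one]
  have hv : (2:ℝ) ^ ((2:ℤ) - (p:ℤ)) = 4 * t := by
    rw [hts, sub_eq_add_neg, ← zpow_mul_zpow]
    norm_num
  have hP : (2:ℝ) ^ p * t = 1 := by
    rw [hts, ← zpow_natCast (2:ℝ) p, zpow_mul_zpow]
    simp
  -- integer facts
  obtain ⟨r, hr⟩ : ∃ r, p = r + 1 := ⟨p - 1, by omega⟩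
  have h2r : (4:ℤ) ≤ 2 ^ r := by
    calc (4:ℤ) = 2 ^ 2 := by norm_num
    _ ≤ 2 ^ r := pow_le_pow_right₀ (by norm_num) (by omega)
  have h2p : (2:ℤ) ^ p = 2 * 2 ^ r := by rw [hr, pow_succ]; ring
  have h2p1 : (2:ℤ) ^ (p+1) = 4 * 2 ^ r := by rw [hr, pow_succ, pow_succ]; ring
  have hrp : p - 1 = r := by omega
  have hPr : (2:ℝ) ^ r * (2 * t) = 1 := by
    have : (2:ℝ) ^ p = 2 ^ r * 2 := by rw [hr, pow_succ]
    nlinarith [hP]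
  set N1 : ℤ := 2 ^ p + 2 with hN1s
  set N3 : ℤ := 3 * 2 ^ r + 2 with hN3s
  -- the tie roundings
  have hN1even : 2 ∣ N1 := by rw [hN1s, h2p]; omega
  have hN3even : 2 ∣ N3 := by
    have : (2:ℤ) ∣ 2 ^ r := dvd_pow_self 2 (by omega)
    rw [hN3s]; omega
  have tie1 : FPT.rnd p q (((2*N1 + (-1) : ℤ):ℝ) * t) = .fin ((N1:ℝ) * (2:ℝ) ^ ((1:ℤ) - (p:ℤ))) :=
    tie hp hpq N1 (-1) (Or.inr rfl) hN1even (by omega) (by omega)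
  have tie3 : FPT.rnd p q (((2*N3 + 1 : ℤ):ℝ) * t) = .fin ((N3:ℝ) * (2:ℝ) ^ ((1:ℤ) - (p:ℤ))) :=
    tie hp hpq N3 1 (Or.inl rfl) hN3even (by omega) (by omega)
  -- first sums (cases 1,2)
  have hsum1 : (1 + t) + (1 + (2:ℝ) ^ ((1:ℤ) - (p:ℤ))) = ((2*N1 + (-1) : ℤ):ℝ) * t := by
    rw [hu, hN1s]
    push_cast
    linear_combination (-2) * hP
  have hsum1' : (1 + (2:ℝ) ^ ((1:ℤ) - (p:ℤ))) + (1 + t) = ((2*N1 + (-1) : ℤ):ℝ) * t := by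
    rw [← hsum1]; ring
  -- value identities
  have hval1 : (N1:ℝ) * (2:ℝ) ^ ((1:ℤ) - (p:ℤ)) = 2 + 4 * t := by
    rw [hu, hN1s]
    push_cast
    linear_combination 2 * hP
  have hval3 : (N3:ℝ) * (2:ℝ) ^ ((1:ℤ) - (p:ℤ)) = 3 + (2:ℝ) ^ ((2:ℤ) - (p:ℤ)) := by
    rw [hu, hv, hN3s]
    push_cast
    linear_combination 3 * hPr
  have hvalM : ((3 * 2 ^ r + 3 : ℤ):ℝ) * (2:ℝ) ^ ((1:ℤ) - (p:ℤ)) = 3 + 3 * (2:ℝ) ^ ((1:ℤ) - (p:ℤ)) := by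
    rw [hu]
    push_cast
    linear_combination 3 * hPr
  -- second sum for cases 1,2 : exact float 3 + 3·2^(1-p)
  have hsum2 : (N1:ℝ) * (2:ℝ) ^ ((1:ℤ) - (p:ℤ)) + (1 + (2:ℝ) ^ ((1:ℤ) - (p:ℤ)))
      = 3 + 3 * (2:ℝ) ^ ((1:ℤ) - (p:ℤ)) := by
    rw [hval1, hu]; ring
  have hmemM : (3 + 3 * (2:ℝ) ^ ((1:ℤ) - (p:ℤ))) ∈ FPT.Fset p q := by
    have h := mem_Fset hp hpq (3 * 2 ^ r + 3) (by omega) (by omega)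
    rwa [hvalM] at h
  have hbM : |3 + 3 * (2:ℝ) ^ ((1:ℤ) - (p:ℤ))| < FPT.thr p q := by
    rw [hu, abs_of_pos (by linarith)]
    linarith
  have e2 : FPT.rnd p q (3 + 3 * (2:ℝ) ^ ((1:ℤ) - (p:ℤ))) = .fin (3 + 3 * (2:ℝ) ^ ((1:ℤ) - (p:ℤ))) :=
    rnd_exact _ hmemM hbM
  -- case 3 first sum : exact float N1·2^(1-p)
  have hsum3 : (1 + (2:ℝ) ^ ((1:ℤ) - (p:ℤ))) + (1 + (2:ℝ) ^ ((1:ℤ) - (p:ℤ)))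
      = (N1:ℝ) * (2:ℝ) ^ ((1:ℤ) - (p:ℤ)) := by
    rw [hval1, hu]; ring
  have hmemN1 : ((N1:ℝ) * (2:ℝ) ^ ((1:ℤ) - (p:ℤ))) ∈ FPT.Fset p q :=
    mem_Fset hp hpq N1 (by omega) (by omega)
  have hbN1 : |(N1:ℝ) * (2:ℝ) ^ ((1:ℤ) - (p:ℤ))| < FPT.thr p q := by
    rw [hval1, abs_of_pos (by linarith)]
    linarith
  have e3 : FPT.rnd p q ((N1:ℝ) * (2:ℝ) ^ ((1:ℤ) - (p:ℤ))) = .fin ((N1:ℝ) * (2:ℝ) ^ ((1:ℤ) - (p:ℤ))) :=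
    rnd_exact _ hmemN1 hbN1
  -- case 3 second sum
  have hsum4 : (N1:ℝ) * (2:ℝ) ^ ((1:ℤ) - (p:ℤ)) + (1 + t) = ((2*N3 + 1 : ℤ):ℝ) * t := by
    rw [hval1, hN3s]
    push_cast
    have h2pr : (2:ℝ) ^ p = 2 ^ r * 2 := by rw [hr, pow_succ]
    nlinarith [hP, h2pr]
  refine ⟨?_, ?_, ?_⟩
  · show FPT.fadd p q (FPT.rnd p q ((1 + t) + (1 + (2:ℝ) ^ ((1:ℤ) - (p:ℤ)))))
      (.fin (1 + 2 ^ ((1:ℤ) - (p:ℤ)))) = _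
    rw [hsum1, tie1]
    show FPT.rnd p q ((N1:ℝ) * (2:ℝ) ^ ((1:ℤ) - (p:ℤ)) + (1 + (2:ℝ) ^ ((1:ℤ) - (p:ℤ)))) = _
    rw [hsum2, e2]
  · show FPT.fadd p q (FPT.rnd p q ((1 + (2:ℝ) ^ ((1:ℤ) - (p:ℤ))) + (1 + t)))
      (.fin (1 + 2 ^ ((1:ℤ) - (p:ℤ)))) = _
    rw [hsum1', tie1]
    show FPT.rnd p q ((N1:ℝ) * (2:ℝ) ^ ((1:ℤ) - (p:ℤ)) + (1 + (2:ℝ) ^ ((1:ℤ) - (p:ℤ)))) = _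
    rw [hsum2, e2]
  · show FPT.fadd p q (FPT.rnd p q ((1 + (2:ℝ) ^ ((1:ℤ) - (p:ℤ))) + (1 + (2:ℝ) ^ ((1:ℤ) - (p:ℤ)))))
      (.fin (1 + t)) = _
    rw [hsum3, e3]
    show FPT.rnd p q ((N1:ℝ) * (2:ℝ) ^ ((1:ℤ) - (p:ℤ)) + (1 + t)) = _
    rw [hsum4, tie3, hval3]
end
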